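/- arXiv:1809.00651 — 7 statements merged into one kernel-verified Lean document; each statement's English description precedes it below -/
import Mathlib

section
/- Let X and Y be complex Banach spaces and let (R(t))_{t>0} be a strongly continuous family of bounded linear operators from X to Y satisfying ‖R(t)‖_{L(X,Y)} ≤ M/(1+t^γ) for all t > 0, where γ > 1 and M > 0. If g : ℝ → X is equi-Weyl-1-almost periodic and Stepanov 1-bounded, then for every t ∈ ℝ the integral G(t) := ∫_{−∞}^t R(t−s) g(s) ds converges absolutely, and the function G : ℝ → Y is bounded, continuous, and equi-Weyl-1-almost periodic. -/
/-!
The bound `‖R r‖ ≤ w r := M / (1 + r ^ γ)` with `γ > 1` makes `w` summable over the integers, so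
cutting `(-∞, t]` into unit intervals gives `∫_{-∞}^t w (t - s) ‖g s‖ ds ≤ (∑ₖ w k) ‖g‖_{S^1}`.
This yields absolute convergence and boundedness of `G`, and a dominating function for its
continuity. For almost periodicity, `G (· + τ) - G` is the convolution of `R` with `g (· + τ) - g`;
by Fubini, its mean over any interval of length `l` is at most `∫₀^∞ w` times the largest such
mean of `‖g (· + τ) - g‖`, so an `ε / (1 + ∫₀^∞ w)`-almost period of `g` is an `ε`-almost period
of `G`.
-/

open MeasureTheory Filter Set
open scoped ENNReal NNReal Topology

noncomputable section

/-- Local `p`-integrability of `f` on the set `I`. -/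
def LocLpOn {X : Type*} [NormedAddCommGroup X] (p : ℝ) (I : Set ℝ) (f : ℝ → X) : Prop :=
  AEStronglyMeasurable f (volume.restrict I) ∧
    MeasureTheory.LocallyIntegrableOn (fun t => ‖f t‖ ^ p) I volume

/-- The Stepanov `p`-norm of `f` over the set `I`, as an extended nonnegative real. -/
def SpNorm {X : Type*} [NormedAddCommGroup X] (p : ℝ) (I : Set ℝ) (f : ℝ → X) : ℝ≥0∞ :=
  ⨆ t ∈ I, ENNReal.ofReal ((∫ s in t..t + 1, ‖f s‖ ^ p) ^ (1 / p))

/-- The Stepanov distance `D_{S_l}^p[f,g]` over the set `I`, as an extended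
nonnegative real. -/
def DS {X : Type*} [NormedAddCommGroup X] (p l : ℝ) (I : Set ℝ) (f g : ℝ → X) : ℝ≥0∞ :=
  ⨆ x ∈ I, ENNReal.ofReal (((1 / l) * ∫ t in x..x + l, ‖f t - g t‖ ^ p) ^ (1 / p))

/-- `f` is equi-Weyl-`p`-almost periodic on `I`. -/
def EquiWeylAP {X : Type*} [NormedAddCommGroup X] (p : ℝ) (I : Set ℝ) (f : ℝ → X) : Prop :=
  ∀ ε : ℝ, 0 < ε → ∃ l : ℝ, 0 < l ∧ ∃ L : ℝ, 0 < L ∧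
    ∀ a : ℝ, Set.Icc a (a + L) ⊆ I →
      ∃ τ ∈ Set.Icc a (a + L), DS p l I (fun t => f (t + τ)) f ≤ ENNReal.ofReal ε

/-- `f` is Weyl-`p`-almost periodic on `I`. -/
def WeylAP {X : Type*} [NormedAddCommGroup X] (p : ℝ) (I : Set ℝ) (f : ℝ → X) : Prop :=
  ∀ ε : ℝ, 0 < ε → ∃ L : ℝ, 0 < L ∧
    ∀ a : ℝ, Set.Icc a (a + L) ⊆ I →
      ∃ τ ∈ Set.Icc a (a + L),
        Filter.limsup (fun l => DS p l I (fun t => f (t + τ)) f) Filter.atTop ≤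
          ENNReal.ofReal ε

/-- `f` is Stepanov `p`-almost periodic on `I`. -/
def StepanovAP {X : Type*} [NormedAddCommGroup X] (p : ℝ) (I : Set ℝ) (f : ℝ → X) : Prop :=
  ∀ ε : ℝ, 0 < ε → ∃ L : ℝ, 0 < L ∧
    ∀ a : ℝ, Set.Icc a (a + L) ⊆ I →
      ∃ τ ∈ Set.Icc a (a + L),
        ∀ t ∈ I, (∫ s in t..t + 1, ‖f (s + τ) - f s‖ ^ p) ^ (1 / p) ≤ ε

/-- `v` belongs to `C_0([0,∞) : Y)`: continuous on `[0,∞)` and vanishing at `+∞`. -/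
def CZero {Y : Type*} [NormedAddCommGroup Y] (v : ℝ → Y) : Prop :=
  ContinuousOn v (Set.Ici (0 : ℝ)) ∧
    Filter.Tendsto (fun t => ‖v t‖) Filter.atTop (nhds 0)

/-- `f` is Stepanov `p`-vanishing (as a function on `[0,∞)`). -/
def SpVanishing {Y : Type*} [NormedAddCommGroup Y] (p : ℝ) (f : ℝ → Y) : Prop :=
  SpNorm p (Set.Ici 0) f < ⊤ ∧
    Filter.Tendsto (fun t => ∫ s in t..t + 1, ‖f s‖ ^ p) Filter.atTop (nhds 0)

/-- `f` is equi-Weyl-`p`-vanishing (as a function on `[0,∞)`):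
`lim_{l→∞} limsup_{t→∞} sup_{x≥0} ((1/l)∫_x^{x+l} ‖f(t+s)‖^p ds)^{1/p} = 0`. -/
def EquiWeylVanishing {Y : Type*} [NormedAddCommGroup Y] (p : ℝ) (f : ℝ → Y) : Prop :=
  Filter.Tendsto (fun l : ℝ =>
      Filter.limsup (fun t : ℝ =>
          ⨆ x ∈ Set.Ici (0 : ℝ),
            ENNReal.ofReal (((1 / l) * ∫ s in x..x + l, ‖f (t + s)‖ ^ p) ^ (1 / p)))
        Filter.atTop)
    Filter.atTop (nhds 0)

/-- `f` is Weyl-`p`-vanishing (as a function on `[0,∞)`):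
`lim_{t→∞} limsup_{l→∞} sup_{x≥0} ((1/l)∫_x^{x+l} ‖f(t+s)‖^p ds)^{1/p} = 0`. -/
def WeylVanishing {Y : Type*} [NormedAddCommGroup Y] (p : ℝ) (f : ℝ → Y) : Prop :=
  Filter.Tendsto (fun t : ℝ =>
      Filter.limsup (fun l : ℝ =>
          ⨆ x ∈ Set.Ici (0 : ℝ),
            ENNReal.ofReal (((1 / l) * ∫ s in x..x + l, ‖f (t + s)‖ ^ p) ^ (1 / p)))
        Filter.atTop)
    Filter.atTop (nhds 0)

/-- The majorant of `‖R r‖`, truncated at `r = 0` so that it is antitone and continuous on `ℝ`. -/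
def decayWeight (M γ r : ℝ) : ℝ := M / (1 + max r 0 ^ γ)

section DecayWeight

variable {M γ : ℝ}

theorem decayWeight_of_nonneg {r : ℝ} (hr : 0 ≤ r) : decayWeight M γ r = M / (1 + r ^ γ) := by
  rw [decayWeight, max_eq_left hr]

theorem one_add_max_rpow_pos (r γ : ℝ) : 0 < 1 + max r 0 ^ γ :=
  add_pos_of_pos_of_nonneg one_pos (Real.rpow_nonneg (le_max_right r 0) γ)

theorem decayWeight_nonneg (hM : 0 ≤ M) (r : ℝ) : 0 ≤ decayWeight M γ r :=
  div_nonneg hM (one_add_max_rpow_pos r γ).le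

theorem decayWeight_le (hM : 0 ≤ M) (r : ℝ) : decayWeight M γ r ≤ M :=
  div_le_self hM (le_add_of_nonneg_right (Real.rpow_nonneg (le_max_right r 0) γ))

theorem antitone_decayWeight (hM : 0 ≤ M) (hγ : 0 ≤ γ) : Antitone (decayWeight M γ) := by
  intro r s hrs
  unfold decayWeight
  gcongr

theorem continuous_decayWeight (hγ : 0 ≤ γ) : Continuous (decayWeight M γ) :=
  continuous_const.div
    (continuous_const.add ((continuous_id.max continuous_const).rpow_const fun _ => Or.inr hγ))
    fun r => (one_add_max_rpow_pos r γ).ne'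

theorem summable_decayWeight_sub (hM : 0 ≤ M) (hγ : 1 < γ) (n : ℕ) :
    Summable fun k : ℕ => decayWeight M γ (k - n) := by
  refine (summable_nat_add_iff (n + 1)).1 ?_
  refine (((Real.summable_one_div_nat_add_rpow 1 γ).2 hγ).mul_left M).of_nonneg_of_le
    (fun k => decayWeight_nonneg hM _) fun k => ?_
  have hk : ((k + (n + 1) : ℕ) : ℝ) - n = k + 1 := by push_cast; ring
  rw [hk, decayWeight_of_nonneg (by positivity), abs_of_pos (by positivity), mul_one_div]
  gcongr
  exact le_add_of_nonneg_left zero_le_one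

theorem tsum_ofReal_decayWeight_sub_ne_top (hM : 0 ≤ M) (hγ : 1 < γ) (n : ℕ) :
    ∑' k : ℕ, ENNReal.ofReal (decayWeight M γ (k - n)) ≠ ∞ := by
  rw [← ENNReal.ofReal_tsum_of_nonneg (fun k => decayWeight_nonneg hM _)
    (summable_decayWeight_sub hM hγ n)]
  exact ENNReal.ofReal_ne_top

theorem tsum_ofReal_decayWeight_ne_top (hM : 0 ≤ M) (hγ : 1 < γ) :
    ∑' k : ℕ, ENNReal.ofReal (decayWeight M γ k) ≠ ∞ := by
  simpa using tsum_ofReal_decayWeight_sub_ne_top hM hγ 0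

theorem antitone_ofReal_decayWeight (hM : 0 ≤ M) (hγ : 0 ≤ γ) :
    Antitone fun r => ENNReal.ofReal (decayWeight M γ r) :=
  fun _ _ hrs => ENNReal.ofReal_le_ofReal (antitone_decayWeight hM hγ hrs)

end DecayWeight

section KernelBounds

theorem setLIntegral_Iic_comp_sub_left (f : ℝ → ℝ≥0∞) (t : ℝ) :
    ∫⁻ s in Iic t, f (t - s) = ∫⁻ u in Ici 0, f u := by
  have h := (Measure.measurePreserving_sub_left volume t).setLIntegral_comp_preimage_emb
    (measurableEmbedding_subLeft t) f (Ici 0)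
  rwa [preimage_const_sub_Ici, sub_zero] at h

theorem setLIntegral_Ioc_comp_add_right (f : ℝ → ℝ≥0∞) (a b c : ℝ) :
    ∫⁻ s in Ioc a b, f (s + c) = ∫⁻ s in Ioc (a + c) (b + c), f s := by
  have h := (measurePreserving_add_right volume c).setLIntegral_comp_preimage_emb
    (measurableEmbedding_addRight c) f (Ioc (a + c) (b + c))
  rwa [preimage_add_const_Ioc, add_sub_cancel_right, add_sub_cancel_right] at h

theorem ae_restrict_Iic_lt (t : ℝ) : ∀ᵐ s ∂volume.restrict (Iic t), s < t := by
  rw [← Measure.restrict_congr_set Iio_ae_eq_Iic]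
  exact ae_restrict_mem measurableSet_Iio

theorem setLIntegral_Iic_mul_le_tsum_mul {φ h : ℝ → ℝ≥0∞} {C : ℝ≥0∞} (hφ : AntitoneOn φ (Ici 0))
    (hh_meas : AEMeasurable h) (hh : ∀ a, ∫⁻ s in Ioc a (a + 1), h s ≤ C) (t : ℝ) :
    ∫⁻ s in Iic t, φ (t - s) * h s ≤ (∑' k : ℕ, φ k) * C := by
  have h_cover : Iic t = ⋃ k : ℕ, Ioc (t - (k + 1)) (t - k) := by
    ext s
    simp only [mem_Iic, mem_iUnion, mem_Ioc]
    refine ⟨fun hs => ⟨⌊t - s⌋₊, ?_, ?_⟩, fun ⟨k, _, hk⟩ => hk.trans (sub_le_self _ k.cast_nonneg)⟩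
    · linarith [Nat.lt_floor_add_one (t - s)]
    · linarith [Nat.floor_le (sub_nonneg.2 hs)]
  rw [h_cover, ← ENNReal.tsum_mul_right]
  refine (lintegral_iUnion_le _ _).trans (ENNReal.tsum_le_tsum fun k => ?_)
  calc ∫⁻ s in Ioc (t - (k + 1)) (t - k), φ (t - s) * h s
      ≤ ∫⁻ s in Ioc (t - (k + 1)) (t - k), φ k * h s := by
        refine setLIntegral_mono' measurableSet_Ioc fun s hs => ?_
        gcongr
        exact hφ (mem_Ici.2 k.cast_nonneg) (mem_Ici.2 (by linarith [hs.2, k.cast_nonneg (α := ℝ)]))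
          (by linarith [hs.2])
    _ = φ k * ∫⁻ s in Ioc (t - (k + 1)) (t - (k + 1) + 1), h s := by
        rw [lintegral_const_mul'' _ hh_meas.restrict, show t - (k + 1 : ℝ) + 1 = t - k by ring]
    _ ≤ φ k * C := by gcongr; exact hh _

theorem setLIntegral_Ici_le_tsum {φ : ℝ → ℝ≥0∞} (hφ : AntitoneOn φ (Ici 0)) :
    ∫⁻ u in Ici 0, φ u ≤ ∑' k : ℕ, φ k := by
  have h := setLIntegral_Iic_mul_le_tsum_mul hφ aemeasurable_const (h := fun _ => 1) (C := 1)
    (fun a => by simp [Real.volume_Ioc]) 0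
  simp only [mul_one] at h
  rwa [setLIntegral_Iic_comp_sub_left φ 0] at h

theorem setLIntegral_Ioc_lintegral_Iic_mul_le {φ h : ℝ → ℝ≥0∞} {l : ℝ} {C : ℝ≥0∞}
    (hφ : Measurable φ) (hh : AEMeasurable h) (hC : ∀ y, ∫⁻ s in Ioc y (y + l), h s ≤ C)
    (x : ℝ) :
    ∫⁻ t in Ioc x (x + l), ∫⁻ s in Iic t, φ (t - s) * h s ≤ (∫⁻ u in Ici 0, φ u) * C := by
  obtain ⟨h', hh'_meas, hhh'⟩ := hh
  calc ∫⁻ t in Ioc x (x + l), ∫⁻ s in Iic t, φ (t - s) * h s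
      = ∫⁻ t in Ioc x (x + l), ∫⁻ u in Ici 0, φ u * h' (t - u) := by
        refine lintegral_congr fun t => ?_
        refine Eq.trans ?_ (setLIntegral_Iic_comp_sub_left (fun u => φ u * h' (t - u)) t)
        refine lintegral_congr_ae (ae_restrict_of_ae ?_)
        filter_upwards [hhh'] with s hs
        rw [sub_sub_cancel, hs]
    _ = ∫⁻ u in Ici 0, ∫⁻ t in Ioc x (x + l), φ u * h' (t - u) :=
        lintegral_lintegral_swap ((hφ.comp measurable_snd).mul
          (hh'_meas.comp (measurable_fst.sub measurable_snd))).aemeasurable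
    _ ≤ ∫⁻ u in Ici 0, φ u * C := by
        refine lintegral_mono fun u => ?_
        rw [lintegral_const_mul _ (by fun_prop : Measurable fun t => h' (t - u))]
        gcongr
        simp_rw [sub_eq_add_neg]
        rw [setLIntegral_Ioc_comp_add_right h', add_right_comm,
          ← setLIntegral_congr_fun_ae measurableSet_Ioc (hhh'.mono fun s hs _ => hs)]
        exact hC _
    _ = (∫⁻ u in Ici 0, φ u) * C := lintegral_mul_const _ hφ

end KernelBounds

section StepanovOne

variable {X : Type*} [NormedAddCommGroup X]

theorem MeasureTheory.LocallyIntegrable.comp_add_right {G E : Type*} [AddGroup G]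
    [TopologicalSpace G] [IsTopologicalAddGroup G] [MeasurableSpace G] [BorelSpace G]
    [NormedAddCommGroup E]
    {μ : Measure G} [μ.IsAddRightInvariant] {f : G → E} (hf : LocallyIntegrable f μ) (g : G) :
    LocallyIntegrable (fun x => f (x + g)) μ := by
  rw [← map_add_right_eq_self μ g] at hf
  exact (locallyIntegrable_map_homeomorph (Homeomorph.addRight g)).1 hf

theorem LocLpOn.locallyIntegrable_of_one {g : ℝ → X} (hg : LocLpOn 1 univ g) :
    LocallyIntegrable g := by
  have h_norm : LocallyIntegrable fun t => ‖g t‖ := by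
    simpa [Real.rpow_one, locallyIntegrableOn_univ] using hg.2
  exact h_norm.mono (by simpa using hg.1) (ae_of_all _ fun t => (norm_norm _).ge)

theorem ofReal_intervalIntegral_norm {f : ℝ → X} (hf : LocallyIntegrable f) {a b : ℝ}
    (hab : a ≤ b) : ENNReal.ofReal (∫ t in a..b, ‖f t‖) = ∫⁻ t in Ioc a b, ‖f t‖ₑ := by
  rw [intervalIntegral.integral_of_le hab]
  exact ofReal_integral_norm_eq_lintegral_enorm
    ((hf.integrableOn_isCompact isCompact_Icc).mono_set Ioc_subset_Icc_self)

theorem setLIntegral_Ioc_enorm_le_spNorm_one {g : ℝ → X} (hg : LocallyIntegrable g) (a : ℝ) :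
    ∫⁻ s in Ioc a (a + 1), ‖g s‖ₑ ≤ SpNorm 1 univ g := by
  rw [← ofReal_intervalIntegral_norm hg (le_add_of_nonneg_right zero_le_one)]
  refine le_of_eq_of_le ?_ (le_iSup₂ (f := fun t (_ : t ∈ univ) =>
    ENNReal.ofReal ((∫ s in t..t + 1, ‖g s‖ ^ (1 : ℝ)) ^ (1 / (1 : ℝ)))) a (mem_univ a))
  simp only [Real.rpow_one, div_one]

theorem DS_one_le_ofReal_iff {f g : ℝ → X} {l ε : ℝ} (hl : 0 < l) (hε : 0 ≤ ε)
    (hfg : LocallyIntegrable fun t => f t - g t) :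
    DS 1 l univ f g ≤ ENNReal.ofReal ε ↔
      ∀ x, ∫⁻ t in Ioc x (x + l), ‖f t - g t‖ₑ ≤ ENNReal.ofReal (l * ε) := by
  simp only [DS, iSup₂_le_iff, mem_univ, forall_const, Real.rpow_one, div_one]
  refine forall_congr' fun x => ?_
  rw [ENNReal.ofReal_le_ofReal_iff hε, ← ofReal_intervalIntegral_norm hfg (by linarith),
    ENNReal.ofReal_le_ofReal_iff (by positivity), one_div, inv_mul_le_iff₀ hl]

variable {M γ : ℝ} {h : ℝ → X} {C : ℝ≥0∞}

theorem integrableOn_decayWeight_sub_mul_norm (hM : 0 ≤ M) (hγ : 1 < γ)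
    (hh_meas : AEStronglyMeasurable h) (hC : C ≠ ∞)
    (hh : ∀ a, ∫⁻ s in Ioc a (a + 1), ‖h s‖ₑ ≤ C) (t : ℝ) (n : ℕ) :
    IntegrableOn (fun s => decayWeight M γ (t - s - n) * ‖h s‖) (Iic t) := by
  have hw : Continuous fun s => decayWeight M γ (t - s - n) :=
    (continuous_decayWeight (by linarith)).comp (by fun_prop)
  refine ⟨(hw.aestronglyMeasurable.mul hh_meas.norm).restrict, ?_⟩
  rw [hasFiniteIntegral_iff_enorm]
  calc ∫⁻ s in Iic t, ‖decayWeight M γ (t - s - n) * ‖h s‖‖ₑ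
      = ∫⁻ s in Iic t, ENNReal.ofReal (decayWeight M γ (t - s - n)) * ‖h s‖ₑ := by
        simp only [enorm_mul, enorm_norm, Real.enorm_of_nonneg (decayWeight_nonneg hM _)]
    _ ≤ (∑' k : ℕ, ENNReal.ofReal (decayWeight M γ (k - n))) * C :=
        setLIntegral_Iic_mul_le_tsum_mul (φ := fun r => ENNReal.ofReal (decayWeight M γ (r - n)))
          (fun _ _ _ _ hrs => antitone_ofReal_decayWeight hM (by linarith) (by linarith))
          hh_meas.enorm hh t
    _ < ∞ := ENNReal.mul_lt_top (tsum_ofReal_decayWeight_sub_ne_top hM hγ n).lt_top hC.lt_top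

end StepanovOne

section OperatorFamily

variable {𝕜 X Y : Type*} [NontriviallyNormedField 𝕜] [NormedAddCommGroup X] [NormedSpace 𝕜 X]
  [NormedAddCommGroup Y] [NormedSpace 𝕜 Y]

theorem continuous_uncurry_apply_of_norm_le {T : Type*} [TopologicalSpace T]
    {A : T → X →L[𝕜] Y} {C : ℝ} (hA : ∀ x, Continuous fun t => A t x) (hC : ∀ t, ‖A t‖ ≤ C) :
    Continuous fun p : T × X => A p.1 p.2 := by
  refine continuous_iff_continuousAt.2 fun ⟨t₀, x₀⟩ => ?_
  have h_small : Tendsto (fun p : T × X => A p.1 (p.2 - x₀)) (𝓝 (t₀, x₀)) (𝓝 0) := by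
    refine squeeze_zero_norm (fun p => (A p.1).le_of_opNorm_le (hC p.1) _) ?_
    have h_cont : Continuous fun p : T × X => C * ‖p.2 - x₀‖ := by fun_prop
    simpa using h_cont.tendsto (t₀, x₀)
  have h_sum := ((hA x₀).comp continuous_fst).continuousAt.tendsto.add h_small
  simp only [Function.comp_apply, ← map_add, add_sub_cancel, add_zero] at h_sum
  exact h_sum

theorem aestronglyMeasurable_apply_of_pos {α : Type*} [MeasurableSpace α] {μ : Measure α}
    {R : ℝ → X →L[𝕜] Y} {C : ℝ} (hR : ∀ x, ContinuousOn (fun t => R t x) (Ioi 0))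
    (hC : ∀ t, 0 < t → ‖R t‖ ≤ C) {f : α → ℝ} {g : α → X} (hf : AEMeasurable f μ)
    (hf_pos : ∀ᵐ a ∂μ, 0 < f a) (hg : AEStronglyMeasurable g μ) :
    AEStronglyMeasurable (fun a => R (f a) (g a)) μ := by
  have h_trunc (n : ℕ) :
      AEStronglyMeasurable (fun a => R (max (f a) (1 / (n + 1))) (g a)) μ := by
    have hc : (0 : ℝ) < 1 / (n + 1) := by positivity
    have h_cont := continuous_uncurry_apply_of_norm_le (A := fun t => R (max t (1 / (n + 1))))
      (fun x => (hR x).comp_continuous (continuous_id.max continuous_const)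
        fun t => hc.trans_le (le_max_right _ _))
      fun t => hC _ (hc.trans_le (le_max_right _ _))
    exact h_cont.comp_aestronglyMeasurable (hf.aestronglyMeasurable.prodMk hg)
  refine aestronglyMeasurable_of_tendsto_ae atTop h_trunc ?_
  filter_upwards [hf_pos] with a ha
  refine tendsto_const_nhds.congr' ?_
  filter_upwards [tendsto_one_div_add_atTop_nhds_zero_nat.eventually (eventually_le_nhds ha)]
    with n hn
  rw [max_eq_left hn]

variable {R : ℝ → X →L[𝕜] Y} {M γ : ℝ} {h : ℝ → X} {C : ℝ≥0∞}

theorem enorm_apply_sub_le (hR : ∀ t, 0 < t → ‖R t‖ ≤ decayWeight M γ t) {s t : ℝ} (hst : s < t)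
    (v : X) : ‖R (t - s) v‖ₑ ≤ ENNReal.ofReal (decayWeight M γ (t - s)) * ‖v‖ₑ := by
  refine (R (t - s)).le_opENorm v |>.trans ?_
  gcongr
  rw [← ofReal_norm]
  exact ENNReal.ofReal_le_ofReal (hR _ (sub_pos.2 hst))

theorem setLIntegral_Iic_enorm_apply_sub_le (hR : ∀ t, 0 < t → ‖R t‖ ≤ decayWeight M γ t)
    (hM : 0 ≤ M) (hγ : 0 ≤ γ) (hh_meas : AEStronglyMeasurable h)
    (hh : ∀ a, ∫⁻ s in Ioc a (a + 1), ‖h s‖ₑ ≤ C) (t : ℝ) :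
    ∫⁻ s in Iic t, ‖R (t - s) (h s)‖ₑ ≤ (∑' k : ℕ, ENNReal.ofReal (decayWeight M γ k)) * C :=
  calc ∫⁻ s in Iic t, ‖R (t - s) (h s)‖ₑ
      ≤ ∫⁻ s in Iic t, ENNReal.ofReal (decayWeight M γ (t - s)) * ‖h s‖ₑ :=
        lintegral_mono_ae ((ae_restrict_Iic_lt t).mono fun _ hs => enorm_apply_sub_le hR hs _)
    _ ≤ _ := setLIntegral_Iic_mul_le_tsum_mul ((antitone_ofReal_decayWeight hM hγ).antitoneOn _)
        hh_meas.enorm hh t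

theorem integrableOn_apply_sub (hRsc : ∀ x, ContinuousOn (fun t => R t x) (Ioi 0))
    (hR : ∀ t, 0 < t → ‖R t‖ ≤ decayWeight M γ t) (hM : 0 ≤ M) (hγ : 1 < γ)
    (hh_meas : AEStronglyMeasurable h) (hC : C ≠ ∞)
    (hh : ∀ a, ∫⁻ s in Ioc a (a + 1), ‖h s‖ₑ ≤ C) (t : ℝ) :
    IntegrableOn (fun s => R (t - s) (h s)) (Iic t) := by
  refine ⟨aestronglyMeasurable_apply_of_pos hRsc (fun r hr => (hR r hr).trans (decayWeight_le hM r))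
    (measurable_const.sub measurable_id).aemeasurable
    ((ae_restrict_Iic_lt t).mono fun s hs => sub_pos.2 hs) hh_meas.restrict, ?_⟩
  rw [hasFiniteIntegral_iff_enorm]
  exact (setLIntegral_Iic_enorm_apply_sub_le hR hM (by linarith) hh_meas hh t).trans_lt
    (ENNReal.mul_lt_top (tsum_ofReal_decayWeight_ne_top hM hγ).lt_top hC.lt_top)

end OperatorFamily

section InfiniteConvolution

variable {𝕜 X Y : Type*} [NontriviallyNormedField 𝕜] [NormedAddCommGroup X] [NormedSpace 𝕜 X]
  [NormedAddCommGroup Y] [NormedSpace 𝕜 Y] [NormedSpace ℝ Y]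

def infiniteConv (R : ℝ → X →L[𝕜] Y) (h : ℝ → X) (t : ℝ) : Y := ∫ s in Iic t, R (t - s) (h s)

theorem infiniteConv_comp_add_right (R : ℝ → X →L[𝕜] Y) (h : ℝ → X) (t τ : ℝ) :
    infiniteConv R h (t + τ) = infiniteConv R (fun s => h (s + τ)) t := by
  have h_sub := (measurePreserving_add_right volume τ).setIntegral_preimage_emb
    (measurableEmbedding_addRight τ) (fun s => R (t + τ - s) (h s)) (Iic (t + τ))
  rw [preimage_add_const_Iic, add_sub_cancel_right] at h_sub
  simp only [infiniteConv, ← h_sub, add_sub_add_right_eq_sub]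

variable {R : ℝ → X →L[𝕜] Y} {M γ : ℝ} {h : ℝ → X} {C : ℝ≥0∞}

theorem infiniteConv_sub {h₁ h₂ : ℝ → X} {t : ℝ}
    (h₁_int : IntegrableOn (fun s => R (t - s) (h₁ s)) (Iic t))
    (h₂_int : IntegrableOn (fun s => R (t - s) (h₂ s)) (Iic t)) :
    infiniteConv R h₁ t - infiniteConv R h₂ t = infiniteConv R (fun s => h₁ s - h₂ s) t := by
  simp only [infiniteConv, map_sub]
  exact (integral_sub h₁_int h₂_int).symm

theorem norm_infiniteConv_le (hR : ∀ t, 0 < t → ‖R t‖ ≤ decayWeight M γ t) (hM : 0 ≤ M)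
    (hγ : 1 < γ) (hh_meas : AEStronglyMeasurable h) (hC : C ≠ ∞)
    (hh : ∀ a, ∫⁻ s in Ioc a (a + 1), ‖h s‖ₑ ≤ C) (t : ℝ) :
    ‖infiniteConv R h t‖ ≤ ((∑' k : ℕ, ENNReal.ofReal (decayWeight M γ k)) * C).toReal := by
  rw [← toReal_enorm]
  exact ENNReal.toReal_mono (ENNReal.mul_ne_top (tsum_ofReal_decayWeight_ne_top hM hγ) hC)
    ((enorm_integral_le_lintegral_enorm _).trans
      (setLIntegral_Iic_enorm_apply_sub_le hR hM (by linarith) hh_meas hh t))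

theorem continuous_infiniteConv (hRsc : ∀ x, ContinuousOn (fun t => R t x) (Ioi 0))
    (hR : ∀ t, 0 < t → ‖R t‖ ≤ decayWeight M γ t) (hM : 0 ≤ M) (hγ : 1 < γ)
    (hh_meas : AEStronglyMeasurable h) (hC : C ≠ ∞)
    (hh : ∀ a, ∫⁻ s in Ioc a (a + 1), ‖h s‖ₑ ≤ C) :
    Continuous (infiniteConv R h) := by
  refine continuous_iff_continuousAt.2 fun t₀ => ?_
  let F : ℝ → ℝ → Y := fun t => (Iio t).indicator fun s => R (t - s) (h s)
  have hF (t : ℝ) : ∫ s, F t s = infiniteConv R h t := by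
    rw [integral_indicator measurableSet_Iio]
    exact setIntegral_congr_set Iio_ae_eq_Iic
  have hF_meas (t : ℝ) : AEStronglyMeasurable (F t) :=
    ((integrableOn_apply_sub hRsc hR hM hγ hh_meas hC hh t).mono_set Iio_subset_Iic_self
      |>.integrable_indicator measurableSet_Iio).aestronglyMeasurable
  -- For `t > t₀ - 1`, `w (t - s) ≤ w (t₀ + 1 - s - 2)`, which is integrable against `‖h‖`.
  let bound : ℝ → ℝ :=
    (Iic (t₀ + 1)).indicator fun s => decayWeight M γ (t₀ + 1 - s - (2 : ℕ)) * ‖h s‖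
  have h_bound_int : Integrable bound := (integrable_indicator_iff measurableSet_Iic).2
    (integrableOn_decayWeight_sub_mul_norm hM hγ hh_meas hC hh (t₀ + 1) 2)
  have h_dom : ∀ᶠ t in 𝓝 t₀, ∀ᵐ s, ‖F t s‖ ≤ bound s := by
    filter_upwards [Ioi_mem_nhds (sub_one_lt t₀), Iio_mem_nhds (lt_add_one t₀)] with t ht₁ ht₂
    refine ae_of_all _ fun s => ?_
    by_cases hst : s < t
    · have hs : s ∈ Iic (t₀ + 1) := mem_Iic.2 (hst.trans (mem_Iio.1 ht₂)).le
      simp only [F, bound, indicator_of_mem (show s ∈ Iio t from hst), indicator_of_mem hs]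
      refine (R (t - s)).le_of_opNorm_le ((hR _ (sub_pos.2 hst)).trans ?_) _
      exact antitone_decayWeight hM (by linarith) (by push_cast; linarith [mem_Ioi.1 ht₁])
    · simp only [F, indicator_of_notMem (show s ∉ Iio t from hst), norm_zero]
      exact indicator_nonneg (fun s _ => mul_nonneg (decayWeight_nonneg hM _) (norm_nonneg _)) s
  have h_cont : ∀ᵐ s, ContinuousAt (fun t => F t s) t₀ := by
    filter_upwards [Measure.ae_ne volume t₀] with s hs
    rcases hs.lt_or_gt with hlt | hgt
    · have h_apply : ContinuousAt (fun t => R (t - s) (h s)) t₀ :=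
        ((hRsc (h s)).continuousAt (Ioi_mem_nhds (sub_pos.2 hlt))).comp (f := fun t => t - s)
          (continuous_sub_right s).continuousAt
      refine h_apply.congr ?_
      filter_upwards [Ioi_mem_nhds hlt] with t ht
      simp only [F, indicator_of_mem (show s ∈ Iio t from ht)]
    · refine (continuousAt_const (y := (0 : Y))).congr ?_
      filter_upwards [Iio_mem_nhds hgt] with t ht
      simp only [F, indicator_of_notMem (notMem_Iio.2 (mem_Iio.1 ht).le)]
  simpa only [hF] using continuousAt_of_dominated (Eventually.of_forall hF_meas) h_dom
    h_bound_int h_cont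

theorem DS_one_infiniteConv_le (hRsc : ∀ x, ContinuousOn (fun t => R t x) (Ioi 0))
    (hR : ∀ t, 0 < t → ‖R t‖ ≤ decayWeight M γ t) (hM : 0 ≤ M) (hγ : 1 < γ)
    (hh_loc : LocallyIntegrable h) (hC : C ≠ ∞) (hh : ∀ a, ∫⁻ s in Ioc a (a + 1), ‖h s‖ₑ ≤ C)
    {l δ τ : ℝ} (hl : 0 < l) (hδ : 0 ≤ δ)
    (hτ : DS 1 l univ (fun t => h (t + τ)) h ≤ ENNReal.ofReal δ) :
    DS 1 l univ (fun t => infiniteConv R h (t + τ)) (infiniteConv R h) ≤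
      ENNReal.ofReal ((∫⁻ u in Ici 0, ENNReal.ofReal (decayWeight M γ u)).toReal * δ) := by
  set K := ∫⁻ u in Ici 0, ENNReal.ofReal (decayWeight M γ u)
  have hK : K ≠ ∞ := ne_top_of_le_ne_top (tsum_ofReal_decayWeight_ne_top hM hγ)
    (setLIntegral_Ici_le_tsum ((antitone_ofReal_decayWeight hM (by linarith)).antitoneOn _))
  have hG_cont := continuous_infiniteConv hRsc hR hM hγ hh_loc.aestronglyMeasurable hC hh
  have h_shift_loc := hh_loc.comp_add_right τ
  have h_shift (b : ℝ) : ∫⁻ s in Ioc b (b + 1), ‖h (s + τ)‖ₑ ≤ C := by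
    rw [setLIntegral_Ioc_comp_add_right (fun s => ‖h s‖ₑ), add_right_comm]
    exact hh _
  have h_diff (t : ℝ) : infiniteConv R h (t + τ) - infiniteConv R h t =
      infiniteConv R (fun s => h (s + τ) - h s) t := by
    rw [infiniteConv_comp_add_right, infiniteConv_sub
      (integrableOn_apply_sub hRsc hR hM hγ h_shift_loc.aestronglyMeasurable hC h_shift t)
      (integrableOn_apply_sub hRsc hR hM hγ hh_loc.aestronglyMeasurable hC hh t)]
  rw [DS_one_le_ofReal_iff hl hδ (h_shift_loc.sub hh_loc)] at hτ
  rw [DS_one_le_ofReal_iff (f := fun t => infiniteConv R h (t + τ)) hl (by positivity)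
    ((hG_cont.comp (continuous_add_const τ)).sub hG_cont).locallyIntegrable]
  intro x
  calc ∫⁻ t in Ioc x (x + l), ‖infiniteConv R h (t + τ) - infiniteConv R h t‖ₑ
      ≤ ∫⁻ t in Ioc x (x + l), ∫⁻ s in Iic t,
          ENNReal.ofReal (decayWeight M γ (t - s)) * ‖h (s + τ) - h s‖ₑ := by
        refine lintegral_mono fun t => ?_
        rw [h_diff]
        exact (enorm_integral_le_lintegral_enorm _).trans (lintegral_mono_ae
          ((ae_restrict_Iic_lt t).mono fun _ hs => enorm_apply_sub_le hR hs _))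
    _ ≤ K * ENNReal.ofReal (l * δ) :=
        setLIntegral_Ioc_lintegral_Iic_mul_le
          (continuous_decayWeight (by linarith)).measurable.ennreal_ofReal
          (h_shift_loc.sub hh_loc).aestronglyMeasurable.enorm hτ x
    _ = ENNReal.ofReal (l * (K.toReal * δ)) := by
        rw [mul_left_comm, ENNReal.ofReal_mul ENNReal.toReal_nonneg, ENNReal.ofReal_toReal hK]

theorem equiWeylAP_one_infiniteConv (hRsc : ∀ x, ContinuousOn (fun t => R t x) (Ioi 0))
    (hR : ∀ t, 0 < t → ‖R t‖ ≤ decayWeight M γ t) (hM : 0 ≤ M) (hγ : 1 < γ)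
    (hh_loc : LocallyIntegrable h) (hC : C ≠ ∞) (hh : ∀ a, ∫⁻ s in Ioc a (a + 1), ‖h s‖ₑ ≤ C)
    (hap : EquiWeylAP 1 univ h) :
    EquiWeylAP 1 univ (infiniteConv R h) := by
  set k := (∫⁻ u in Ici 0, ENNReal.ofReal (decayWeight M γ u)).toReal
  have hk : 0 ≤ k := ENNReal.toReal_nonneg
  intro ε hε
  obtain ⟨l, hl, L, hL, h_periods⟩ := hap (ε / (k + 1)) (by positivity)
  refine ⟨l, hl, L, hL, fun a haL => ?_⟩
  obtain ⟨τ, hτL, hτ⟩ := h_periods a haL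
  refine ⟨τ, hτL, (DS_one_infiniteConv_le hRsc hR hM hγ hh_loc hC hh hl (by positivity) hτ).trans
    (ENNReal.ofReal_le_ofReal ?_)⟩
  calc k * (ε / (k + 1)) = ε * (k / (k + 1)) := by ring
    _ ≤ ε := mul_le_of_le_one_right hε.le (div_le_one_of_le₀ (by linarith) (by positivity))

end InfiniteConvolution

theorem weyl_convolution_equi_one_general {X Y : Type*}
    [NormedAddCommGroup X] [NormedSpace ℂ X]
    [NormedAddCommGroup Y] [NormedSpace ℂ Y]
    (M γ : ℝ) (hM : 0 < M) (hγ : 1 < γ)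
    (R : ℝ → X →L[ℂ] Y)
    (hRsc : ∀ x : X, ContinuousOn (fun t => R t x) (Set.Ioi (0 : ℝ)))
    (hR : ∀ t : ℝ, 0 < t → ‖R t‖ ≤ M / (1 + t ^ γ))
    (g : ℝ → X) (hgloc : LocLpOn 1 Set.univ g)
    (hgap : EquiWeylAP 1 Set.univ g)
    (hgS : SpNorm 1 Set.univ g < ⊤)
    (G : ℝ → Y) (hG : ∀ t : ℝ, G t = ∫ s in Set.Iic t, R (t - s) (g s)) :
    (∀ t : ℝ, IntegrableOn (fun s => R (t - s) (g s)) (Set.Iic t) volume) ∧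
      (∃ C : ℝ, ∀ t : ℝ, ‖G t‖ ≤ C) ∧ Continuous G ∧ EquiWeylAP 1 Set.univ G := by
  have hRw (t : ℝ) (ht : 0 < t) : ‖R t‖ ≤ decayWeight M γ t := by
    rw [decayWeight_of_nonneg ht.le]
    exact hR t ht
  obtain rfl : G = infiniteConv R g := funext hG
  have hg := hgloc.locallyIntegrable_of_one
  have hgC := setLIntegral_Ioc_enorm_le_spNorm_one hg
  exact ⟨integrableOn_apply_sub hRsc hRw hM.le hγ hg.aestronglyMeasurable hgS.ne hgC,
    ⟨_, norm_infiniteConv_le hRw hM.le hγ hg.aestronglyMeasurable hgS.ne hgC⟩,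
    continuous_infiniteConv hRsc hRw hM.le hγ hg.aestronglyMeasurable hgS.ne hgC,
    equiWeylAP_one_infiniteConv hRsc hRw hM.le hγ hg hgS.ne hgC hgap⟩

/-- Theorem 2.1 (equi-Weyl case, `p = 1`, `β = 1`): invariance of
equi-Weyl-`1`-almost periodicity under the infinite convolution product. -/
theorem weyl_convolution_equi_one {X Y : Type*}
    [NormedAddCommGroup X] [NormedSpace ℂ X] [CompleteSpace X]
    [NormedAddCommGroup Y] [NormedSpace ℂ Y] [CompleteSpace Y]
    (M γ : ℝ) (hM : 0 < M) (hγ : 1 < γ)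
    (R : ℝ → X →L[ℂ] Y)
    (hRsc : ∀ x : X, ContinuousOn (fun t => R t x) (Set.Ioi (0 : ℝ)))
    (hR : ∀ t : ℝ, 0 < t → ‖R t‖ ≤ M / (1 + t ^ γ))
    (g : ℝ → X) (hgloc : LocLpOn 1 Set.univ g)
    (hgap : EquiWeylAP 1 Set.univ g)
    (hgS : SpNorm 1 Set.univ g < ⊤)
    (G : ℝ → Y) (hG : ∀ t : ℝ, G t = ∫ s in Set.Iic t, R (t - s) (g s)) :
    (∀ t : ℝ, IntegrableOn (fun s => R (t - s) (g s)) (Set.Iic t) volume) ∧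
      (∃ C : ℝ, ∀ t : ℝ, ‖G t‖ ≤ C) ∧ Continuous G ∧ EquiWeylAP 1 Set.univ G :=
  weyl_convolution_equi_one_general M γ hM hγ R hRsc hR g hgloc hgap hgS G hG
end
end

section
/- Let 1 ≤ p < ∞, let X be a Banach space, let I = ℝ or I = [0,∞), and let f and g be locally p-integrable functions from I into X. Then the limit lim_{l→∞} D_{S_l}^p[f, g] exists in the extended interval [0, +∞] (i.e., the limit as l → ∞ of sup_{x∈I} ((1/l) ∫_x^{x+l} ‖f(t) − g(t)‖^p dt)^{1/p} exists as an extended nonnegative real number). -/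
open MeasureTheory Filter Set
open scoped ENNReal NNReal Topology

noncomputable section

/-!
Write `M l = sup_{x ∈ I} ∫_x^{x+l} ‖f - g‖^p`, so that `D_{S_l}^p[f,g] = (M l / l)^{1/p}`.
Since `I` is closed under right translations, splitting `[x, x + a + b]` at `x + a` shows that
`M` is subadditive, and it is monotone because the integrand is nonnegative. Fekete's argument,
with monotonicity bridging between multiples of a fixed length, shows that `M l / l` converges
to its infimum when `M` is finite; otherwise `M` is eventually `∞`.
-/

section Fekete

variable {μ : ℝ → ℝ}

lemma nonneg_of_monotoneOn_of_subadditive (hmono : MonotoneOn μ (Ioi 0))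
    (hsub : ∀ a b, 0 < a → 0 < b → μ (a + b) ≤ μ a + μ b) {l : ℝ} (hl : 0 < l) : 0 ≤ μ l := by
  have hle : μ l ≤ μ (l + l) := hmono hl (by simp only [mem_Ioi]; positivity) (by linarith)
  linarith [hsub l l hl hl]

lemma le_nat_succ_mul_of_subadditive (hsub : ∀ a b, 0 < a → 0 < b → μ (a + b) ≤ μ a + μ b)
    {a : ℝ} (ha : 0 < a) (n : ℕ) : μ ((n + 1) * a) ≤ (n + 1) * μ a := by
  induction n with
  | zero => simp
  | succ k ih =>
    calc μ ((↑(k + 1) + 1) * a) = μ ((k + 1) * a + a) := by push_cast; ring_nf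
      _ ≤ μ ((k + 1) * a) + μ a := hsub _ _ (by positivity) ha
      _ ≤ (↑(k + 1) + 1) * μ a := by push_cast; linarith

lemma le_div_add_one_mul_of_subadditive (hmono : MonotoneOn μ (Ioi 0))
    (hsub : ∀ a b, 0 < a → 0 < b → μ (a + b) ≤ μ a + μ b) {a l : ℝ} (ha : 0 < a) (hal : a ≤ l) :
    μ l ≤ (l / a + 1) * μ a := by
  set k := ⌊l / a⌋₊
  have hl_le : l ≤ (k + 1) * a := by
    have := (div_lt_iff₀ ha).1 (Nat.lt_floor_add_one (l / a))
    linarith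
  have hk_le : (k : ℝ) ≤ l / a := Nat.floor_le (div_nonneg (ha.le.trans hal) ha.le)
  have hμa := nonneg_of_monotoneOn_of_subadditive hmono hsub ha
  calc μ l ≤ μ ((k + 1) * a) :=
        hmono (ha.trans_le hal) (by simp only [mem_Ioi]; positivity) hl_le
    _ ≤ (k + 1) * μ a := le_nat_succ_mul_of_subadditive hsub ha k
    _ ≤ (l / a + 1) * μ a := by gcongr

theorem tendsto_div_atTop_of_monotoneOn_of_subadditive (hmono : MonotoneOn μ (Ioi 0))
    (hsub : ∀ a b, 0 < a → 0 < b → μ (a + b) ≤ μ a + μ b) :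
    Tendsto (fun l => μ l / l) atTop (𝓝 (sInf ((fun l => μ l / l) '' Ioi 0))) := by
  set S := (fun l => μ l / l) '' Ioi 0
  have hS : BddBelow S := by
    refine ⟨0, ?_⟩
    rintro _ ⟨l, hl, rfl⟩
    exact div_nonneg (nonneg_of_monotoneOn_of_subadditive hmono hsub hl) (le_of_lt hl)
  refine tendsto_order.2 ⟨fun b hb => ?_, fun b hb => ?_⟩
  · filter_upwards [eventually_gt_atTop 0] with l hl
    exact hb.trans_le (csInf_le hS ⟨l, hl, rfl⟩)
  · have hSne : S.Nonempty := ⟨_, ⟨1, mem_Ioi.2 one_pos, rfl⟩⟩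
    obtain ⟨_, ⟨a, ha, rfl⟩, hab⟩ := exists_lt_of_csInf_lt hSne hb
    have hlim : Tendsto (fun l => μ a / a + μ a / l) atTop (𝓝 (μ a / a + 0)) :=
      tendsto_const_nhds.add (tendsto_const_nhds.div_atTop tendsto_id)
    filter_upwards [eventually_ge_atTop a, hlim.eventually_lt_const (by rwa [add_zero])]
      with l hal hl
    have hl0 : 0 < l := ha.trans_le hal
    calc μ l / l ≤ (l / a + 1) * μ a / l := by
          gcongr; exact le_div_add_one_mul_of_subadditive hmono hsub ha hal
      _ = μ a / a + μ a / l := by field_simp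
      _ < b := hl

end Fekete

theorem ENNReal.exists_tendsto_div_of_monotoneOn_of_subadditive {μ : ℝ → ℝ≥0∞}
    (hmono : MonotoneOn μ (Ioi 0)) (hsub : ∀ a b, 0 < a → 0 < b → μ (a + b) ≤ μ a + μ b) :
    ∃ A, Tendsto (fun l => μ l / ENNReal.ofReal l) atTop (𝓝 A) := by
  by_cases hfin : ∀ l, 0 < l → μ l ≠ ⊤
  · have hmono' : MonotoneOn (fun l => (μ l).toReal) (Ioi 0) := fun a ha b hb hab =>
      ENNReal.toReal_mono (hfin b hb) (hmono ha hb hab)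
    have hsub' : ∀ a b, 0 < a → 0 < b → (μ (a + b)).toReal ≤ (μ a).toReal + (μ b).toReal :=
      fun a b ha hb => ENNReal.toReal_le_add (hsub a b ha hb) (hfin a ha) (hfin b hb)
    refine ⟨_, (ENNReal.tendsto_ofReal
      (tendsto_div_atTop_of_monotoneOn_of_subadditive hmono' hsub')).congr' ?_⟩
    filter_upwards [eventually_gt_atTop 0] with l hl
    rw [ENNReal.ofReal_div_of_pos hl, ENNReal.ofReal_toReal (hfin l hl)]
  · push Not at hfin
    obtain ⟨a, ha, hμa⟩ := hfin
    refine ⟨⊤, tendsto_const_nhds.congr' ?_⟩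
    filter_upwards [eventually_ge_atTop a] with l hal
    have hμl : μ l = ⊤ := top_le_iff.1 (hμa ▸ hmono ha (ha.trans_le hal) hal)
    rw [hμl, ENNReal.top_div_of_ne_top ENNReal.ofReal_ne_top]

lemma IsUpperSet.intervalIntegrable {I : Set ℝ} {h : ℝ → ℝ} (hI : IsUpperSet I)
    (hh : LocallyIntegrableOn h I) {x y : ℝ} (hx : x ∈ I) (hxy : x ≤ y) :
    IntervalIntegrable h volume x y :=
  (intervalIntegrable_iff_integrableOn_Icc_of_le hxy).2
    (hh.integrableOn_compact_subset (fun _ ht => hI ht.1 hx) isCompact_Icc)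

def supWindowIntegral (I : Set ℝ) (h : ℝ → ℝ) (l : ℝ) : ℝ≥0∞ :=
  ⨆ x ∈ I, ENNReal.ofReal (∫ t in x..x + l, h t)

section supWindowIntegral

variable {I : Set ℝ} {h : ℝ → ℝ}

lemma monotoneOn_supWindowIntegral (hI : IsUpperSet I) (hh : LocallyIntegrableOn h I)
    (h0 : ∀ t, 0 ≤ h t) : MonotoneOn (supWindowIntegral I h) (Ici 0) := by
  intro l hl l' hl' hll'
  refine iSup₂_mono fun x hx => ENNReal.ofReal_le_ofReal ?_
  exact intervalIntegral.integral_mono_interval le_rfl (by linarith [mem_Ici.1 hl])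
    (by linarith) (ae_of_all _ fun t => h0 t)
    (hI.intervalIntegrable hh hx (by linarith [mem_Ici.1 hl']))

lemma supWindowIntegral_add_le (hI : IsUpperSet I) (hh : LocallyIntegrableOn h I)
    (h0 : ∀ t, 0 ≤ h t) {a b : ℝ} (ha : 0 ≤ a) (hb : 0 ≤ b) :
    supWindowIntegral I h (a + b) ≤ supWindowIntegral I h a + supWindowIntegral I h b := by
  refine iSup₂_le fun x hx => ?_
  have hxa : x + a ∈ I := hI (by linarith) hx
  have hsplit := intervalIntegral.integral_add_adjacent_intervals
    (hI.intervalIntegrable hh hx (by linarith : x ≤ x + a))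
    (hI.intervalIntegrable hh hxa (by linarith : x + a ≤ x + a + b))
  rw [← add_assoc, ← hsplit, ENNReal.ofReal_add
    (intervalIntegral.integral_nonneg (by linarith) fun t _ => h0 t)
    (intervalIntegral.integral_nonneg (by linarith) fun t _ => h0 t)]
  exact add_le_add (le_iSup₂_of_le x hx le_rfl) (le_iSup₂_of_le (x + a) hxa le_rfl)

end supWindowIntegral

lemma DS_eq_supWindowIntegral {X : Type*} [NormedAddCommGroup X] {p l : ℝ} (hp : 0 < p)
    (hl : 0 < l) (I : Set ℝ) (f g : ℝ → X) :
    DS p l I f g =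
      (supWindowIntegral I (fun t => ‖f t - g t‖ ^ p) l / ENNReal.ofReal l) ^ (1 / p) := by
  have hp' : 0 < 1 / p := by positivity
  have hrpow (u : ℝ≥0∞) : u ^ (1 / p) = ENNReal.orderIsoRpow (1 / p) hp' u := rfl
  rw [DS, supWindowIntegral, ENNReal.iSup_div, hrpow, OrderIso.map_iSup]
  refine iSup_congr fun x => ?_
  rw [ENNReal.iSup_div, OrderIso.map_iSup]
  refine iSup_congr fun _ => ?_
  have hint : 0 ≤ ∫ t in x..x + l, ‖f t - g t‖ ^ p :=
    intervalIntegral.integral_nonneg (by linarith) fun t _ => by positivity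
  rw [ENNReal.orderIsoRpow_apply, ← ENNReal.ofReal_div_of_pos hl,
    ENNReal.ofReal_rpow_of_nonneg (div_nonneg hint hl.le) hp'.le, one_div_mul_eq_div]

section LocLpOn

variable {X : Type*} [NormedAddCommGroup X] {p : ℝ} {I K : Set ℝ} {f g : ℝ → X}

lemma LocLpOn.memLp (hp : 0 < p) (hf : LocLpOn p I f) (hKI : K ⊆ I) (hK : IsCompact K) :
    MemLp f (ENNReal.ofReal p) (volume.restrict K) := by
  refine (integrable_norm_rpow_iff (hf.1.mono_measure (Measure.restrict_mono hKI le_rfl))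
    (by simpa using hp) ENNReal.ofReal_ne_top).1 ?_
  rw [ENNReal.toReal_ofReal hp.le]
  exact hf.2.integrableOn_compact_subset hKI hK

lemma LocLpOn.locallyIntegrableOn_norm_sub_rpow (hp : 0 < p) (hI : IsLocallyClosed I)
    (hf : LocLpOn p I f) (hg : LocLpOn p I g) :
    LocallyIntegrableOn (fun t => ‖f t - g t‖ ^ p) I := by
  refine (locallyIntegrableOn_iff hI).2 fun K hKI hK => ?_
  have := ((hf.memLp hp hKI hK).sub (hg.memLp hp hKI hK)).integrable_norm_rpow
    (by simpa using hp) ENNReal.ofReal_ne_top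
  rwa [ENNReal.toReal_ofReal hp.le] at this

end LocLpOn

/-- The limit `lim_{l→∞} D_{S_l}^p[f,g]` (the Weyl distance) exists in `[0,∞]`. -/
theorem weyl_distance_exists {X : Type*} [NormedAddCommGroup X]
    (p : ℝ) (hp : 1 ≤ p) (I : Set ℝ) (hI : I = Set.univ ∨ I = Set.Ici 0)
    (f g : ℝ → X) (hf : LocLpOn p I f) (hg : LocLpOn p I g) :
    ∃ A : ℝ≥0∞, Filter.Tendsto (fun l => DS p l I f g) Filter.atTop (nhds A) := by
  have hp0 : 0 < p := zero_lt_one.trans_le hp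
  obtain ⟨hIup, hIcl⟩ : IsUpperSet I ∧ IsClosed I := by
    rcases hI with rfl | rfl
    exacts [⟨isUpperSet_univ, isClosed_univ⟩, ⟨isUpperSet_Ici 0, isClosed_Ici⟩]
  have hloc := hf.locallyIntegrableOn_norm_sub_rpow hp0 hIcl.isLocallyClosed hg
  have hnonneg (t : ℝ) : 0 ≤ ‖f t - g t‖ ^ p := by positivity
  obtain ⟨A, hA⟩ := ENNReal.exists_tendsto_div_of_monotoneOn_of_subadditive
    ((monotoneOn_supWindowIntegral hIup hloc hnonneg).mono Ioi_subset_Ici_self)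
    (fun a b ha hb => supWindowIntegral_add_le hIup hloc hnonneg ha.le hb.le)
  refine ⟨A ^ (1 / p), ((ENNReal.continuous_rpow_const.tendsto A).comp hA).congr' ?_⟩
  filter_upwards [eventually_gt_atTop 0] with l hl
  exact (DS_eq_supWindowIntegral hp0 hl I f g).symm
end
end

section
/- Let 1 ≤ p < ∞, let ζ > 1/p, let X be a Banach space, and let h : ℝ → X be Stepanov p-bounded. Then for every t ∈ ℝ the integral ∫_{−∞}^0 ‖h(t+s)‖^p / (1 + |s|^ζ)^p ds converges and satisfies ∫_{−∞}^0 ‖h(t+s)‖^p / (1 + |s|^ζ)^p ds ≤ ‖h‖_{S^p}^p · Σ_{k=0}^∞ (1 + k^ζ)^{−p}, where the series on the right-hand side is finite. -/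
open MeasureTheory Filter Set
open scoped ENNReal NNReal Topology

noncomputable section

/-- Summability estimate from the proof of Theorem 2.1: the integral
`∫_{-∞}^0 ‖h(t+s)‖^p/(1+|s|^ζ)^p ds` converges and is dominated by
`‖h‖_{S^p}^p · Σ_k (1+k^ζ)^{-p}`. -/
theorem stepanov_weighted_integral_bound {X : Type*} [NormedAddCommGroup X]
    (p ζ : ℝ) (hp : 1 ≤ p) (hζ : 1 / p < ζ)
    (h : ℝ → X) (hloc : LocLpOn p Set.univ h)
    (hbd : ∃ B : ℝ, ∀ t : ℝ, (∫ s in t..t + 1, ‖h s‖ ^ p) ^ (1 / p) ≤ B)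
    (C : ℝ)
    (hC : C = sSup (Set.range fun t : ℝ => (∫ s in t..t + 1, ‖h s‖ ^ p) ^ (1 / p))) :
    Summable (fun k : ℕ => 1 / (1 + (k : ℝ) ^ ζ) ^ p) ∧
      (∀ t : ℝ,
        IntegrableOn (fun s => ‖h (t + s)‖ ^ p / (1 + |s| ^ ζ) ^ p) (Set.Iic 0) volume) ∧
      ∀ t : ℝ,
        (∫ s in Set.Iic (0 : ℝ), ‖h (t + s)‖ ^ p / (1 + |s| ^ ζ) ^ p) ≤
          C ^ p * ∑' k : ℕ, 1 / (1 + (k : ℝ) ^ ζ) ^ p := by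
  obtain ⟨B, hB⟩ := hbd
  have hp0 : (0:ℝ) < p := lt_of_lt_of_le one_pos hp
  have hζ0 : (0:ℝ) < ζ := lt_trans (by positivity) hζ
  -- summability
  have hsum : Summable (fun k : ℕ => 1 / (1 + (k : ℝ) ^ ζ) ^ p) := by
    have h1p : 1 < ζ * p := by rw [div_lt_iff₀ hp0] at hζ; linarith
    have hs := (Real.summable_one_div_nat_rpow (p := ζ * p)).mpr h1p
    rw [← summable_nat_add_iff 1]
    refine Summable.of_nonneg_of_le (fun k => by positivity) (fun k => ?_)
      ((summable_nat_add_iff 1).mpr hs)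
    have hk1 : (0:ℝ) < ((k + 1 : ℕ) : ℝ) := by positivity
    have hle : ((k + 1 : ℕ) : ℝ) ^ (ζ * p) ≤ (1 + ((k + 1 : ℕ) : ℝ) ^ ζ) ^ p := by
      rw [Real.rpow_mul hk1.le]
      exact Real.rpow_le_rpow (Real.rpow_nonneg hk1.le _)
        (by linarith [Real.rpow_nonneg hk1.le ζ]) hp0.le
    exact one_div_le_one_div_of_le (Real.rpow_pos_of_pos hk1 _) hle
  -- basic facts about C
  have hbdd : BddAbove (Set.range fun t : ℝ => (∫ s in t..t + 1, ‖h s‖ ^ p) ^ (1 / p)) :=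
    ⟨B, by rintro _ ⟨t, rfl⟩; exact hB t⟩
  have hCle : ∀ t : ℝ, (∫ s in t..t + 1, ‖h s‖ ^ p) ^ (1 / p) ≤ C := fun t => by
    rw [hC]; exact le_csSup hbdd ⟨t, rfl⟩
  have hint_nonneg : ∀ t : ℝ, 0 ≤ ∫ s in t..t + 1, ‖h s‖ ^ p := fun t =>
    intervalIntegral.integral_nonneg (by linarith) fun s _ =>
      Real.rpow_nonneg (norm_nonneg _) _
  have hC0 : 0 ≤ C := le_trans (Real.rpow_nonneg (hint_nonneg 0) _) (hCle 0)
  have hCp : ∀ t : ℝ, (∫ s in t..t + 1, ‖h s‖ ^ p) ≤ C ^ p := by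
    intro t
    have h1 : ((∫ s in t..t + 1, ‖h s‖ ^ p) ^ (1 / p)) ^ p ≤ C ^ p :=
      Real.rpow_le_rpow (Real.rpow_nonneg (hint_nonneg t) _) (hCle t) hp0.le
    rwa [← Real.rpow_mul (hint_nonneg t), one_div_mul_cancel hp0.ne', Real.rpow_one] at h1
  have hsum_nonneg : (0:ℝ) ≤ ∑' k : ℕ, 1 / (1 + (k : ℝ) ^ ζ) ^ p :=
    tsum_nonneg fun k => by positivity
  -- measurability
  have hmeas : AEStronglyMeasurable h volume := by
    have := hloc.1; rwa [Measure.restrict_univ] at this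
  have hlocint : LocallyIntegrable (fun s => ‖h s‖ ^ p) volume :=
    locallyIntegrableOn_univ.mp hloc.2
  have gsm : ∀ t : ℝ,
      AEStronglyMeasurable (fun s => ‖h (t + s)‖ ^ p / (1 + |s| ^ ζ) ^ p) volume := by
    intro t
    have hth : AEStronglyMeasurable (fun s => h (t + s)) volume :=
      hmeas.comp_quasiMeasurePreserving
        (measurePreserving_add_left volume t).quasiMeasurePreserving
    have hnum : AEMeasurable (fun s => ‖h (t + s)‖ ^ p) volume := by
      have := hth.norm.aemeasurable; fun_prop
    have hden : Measurable fun s : ℝ => (1 + |s| ^ ζ) ^ p := by fun_prop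
    exact (hnum.div hden.aemeasurable).aestronglyMeasurable
  have gpos : ∀ (t s : ℝ), 0 ≤ ‖h (t + s)‖ ^ p / (1 + |s| ^ ζ) ^ p := by
    intro t s
    have h1 : (0:ℝ) ≤ ‖h (t + s)‖ ^ p := Real.rpow_nonneg (norm_nonneg _) _
    have h2 : (0:ℝ) ≤ (1 + |s| ^ ζ) ^ p :=
      Real.rpow_nonneg (by positivity) _
    positivity
  -- decomposition of Iic 0
  have hunion : Set.Iic (0:ℝ) = ⋃ k : ℕ, Set.Icc (-(k:ℝ) - 1) (-(k:ℝ)) := by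
    ext s
    simp only [Set.mem_Iic, Set.mem_iUnion, Set.mem_Icc]
    constructor
    · intro hs
      refine ⟨⌊-s⌋₊, ?_, ?_⟩
      · have := Nat.lt_floor_add_one (-s); linarith
      · have := Nat.floor_le (by linarith : (0:ℝ) ≤ -s); linarith
    · rintro ⟨k, h1, h2⟩; have : (0:ℝ) ≤ k := Nat.cast_nonneg k; linarith
  -- bound on unit intervals
  have hunit : ∀ a : ℝ, ∫⁻ u in Set.Icc a (a + 1), ENNReal.ofReal (‖h u‖ ^ p) ≤
      ENNReal.ofReal (C ^ p) := by
    intro a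
    have hi : IntegrableOn (fun s => ‖h s‖ ^ p) (Set.Icc a (a + 1)) volume :=
      hlocint.integrableOn_isCompact isCompact_Icc
    rw [← ofReal_integral_eq_lintegral_ofReal hi
      (Filter.Eventually.of_forall fun s => Real.rpow_nonneg (norm_nonneg _) _)]
    apply ENNReal.ofReal_le_ofReal
    have heq : ∫ u in Set.Icc a (a + 1), ‖h u‖ ^ p = ∫ s in a..a + 1, ‖h s‖ ^ p := by
      rw [integral_Icc_eq_integral_Ioc, intervalIntegral.integral_of_le (by linarith)]
    rw [heq]; exact hCp a
  -- translation
  have htrans : ∀ (t : ℝ) (k : ℕ),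
      ∫⁻ s in Set.Icc (-(k:ℝ) - 1) (-(k:ℝ)), ENNReal.ofReal (‖h (t + s)‖ ^ p) =
      ∫⁻ u in Set.Icc (t - (k:ℝ) - 1) (t - (k:ℝ) - 1 + 1), ENNReal.ofReal (‖h u‖ ^ p) := by
    intro t k
    rw [← lintegral_indicator measurableSet_Icc, ← lintegral_indicator measurableSet_Icc]
    rw [← lintegral_add_left_eq_self (fun u =>
      (Set.Icc (t - (k:ℝ) - 1) (t - (k:ℝ) - 1 + 1)).indicator
        (fun u => ENNReal.ofReal (‖h u‖ ^ p)) u) t]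
    refine lintegral_congr fun s => ?_
    by_cases hs : s ∈ Set.Icc (-(k:ℝ) - 1) (-(k:ℝ))
    · have hm : t + s ∈ Set.Icc (t - (k:ℝ) - 1) (t - (k:ℝ) - 1 + 1) := by
        obtain ⟨h1, h2⟩ := hs
        exact ⟨by linarith, by linarith⟩
      rw [Set.indicator_of_mem hm, Set.indicator_of_mem hs]
    · have hm : t + s ∉ Set.Icc (t - (k:ℝ) - 1) (t - (k:ℝ) - 1 + 1) := by
        intro hc
        obtain ⟨h1, h2⟩ := hc
        exact hs ⟨by linarith, by linarith⟩
      rw [Set.indicator_of_notMem hm, Set.indicator_of_notMem hs]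
  -- the key lintegral bound
  have hkey : ∀ t : ℝ,
      ∫⁻ s in Set.Iic (0:ℝ), ENNReal.ofReal (‖h (t + s)‖ ^ p / (1 + |s| ^ ζ) ^ p) ≤
      ENNReal.ofReal (C ^ p * ∑' k : ℕ, 1 / (1 + (k : ℝ) ^ ζ) ^ p) := by
    intro t
    rw [hunion]
    have step1 :
        ∫⁻ s in ⋃ k : ℕ, Set.Icc (-(k:ℝ) - 1) (-(k:ℝ)),
          ENNReal.ofReal (‖h (t + s)‖ ^ p / (1 + |s| ^ ζ) ^ p) ≤
        ∑' k : ℕ, ∫⁻ s in Set.Icc (-(k:ℝ) - 1) (-(k:ℝ)),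
          ENNReal.ofReal (‖h (t + s)‖ ^ p / (1 + |s| ^ ζ) ^ p) :=
      lintegral_iUnion_le _ _
    have step2 : ∀ k : ℕ,
        ∫⁻ s in Set.Icc (-(k:ℝ) - 1) (-(k:ℝ)),
          ENNReal.ofReal (‖h (t + s)‖ ^ p / (1 + |s| ^ ζ) ^ p) ≤
        ENNReal.ofReal (1 / (1 + (k : ℝ) ^ ζ) ^ p) * ENNReal.ofReal (C ^ p) := by
      intro k
      have hkζ : (0:ℝ) < (1 + (k : ℝ) ^ ζ) ^ p := by positivity
      have hmono :
          ∫⁻ s in Set.Icc (-(k:ℝ) - 1) (-(k:ℝ)),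
            ENNReal.ofReal (‖h (t + s)‖ ^ p / (1 + |s| ^ ζ) ^ p) ≤
          ∫⁻ s in Set.Icc (-(k:ℝ) - 1) (-(k:ℝ)),
            ENNReal.ofReal (1 / (1 + (k : ℝ) ^ ζ) ^ p) * ENNReal.ofReal (‖h (t + s)‖ ^ p) := by
        refine lintegral_mono_ae ((ae_restrict_iff' measurableSet_Icc).mpr
          (Filter.Eventually.of_forall fun s hs => ?_))
        obtain ⟨h1, h2⟩ := hs
        have hks : (k:ℝ) ≤ |s| := by
          rw [abs_of_nonpos (by linarith : s ≤ 0)]; linarith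
        have hd : (1 + (k : ℝ) ^ ζ) ^ p ≤ (1 + |s| ^ ζ) ^ p := by
          refine Real.rpow_le_rpow (by positivity) ?_ hp0.le
          have := Real.rpow_le_rpow (Nat.cast_nonneg k) hks hζ0.le
          linarith
        have hn : (0:ℝ) ≤ ‖h (t + s)‖ ^ p := Real.rpow_nonneg (norm_nonneg _) _
        have hdiv : ‖h (t + s)‖ ^ p / (1 + |s| ^ ζ) ^ p ≤
            1 / (1 + (k : ℝ) ^ ζ) ^ p * ‖h (t + s)‖ ^ p := by
          rw [one_div, inv_mul_eq_div]
          exact div_le_div_of_nonneg_left hn hkζ hd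
        calc ENNReal.ofReal (‖h (t + s)‖ ^ p / (1 + |s| ^ ζ) ^ p)
            ≤ ENNReal.ofReal (1 / (1 + (k : ℝ) ^ ζ) ^ p * ‖h (t + s)‖ ^ p) :=
              ENNReal.ofReal_le_ofReal hdiv
          _ = ENNReal.ofReal (1 / (1 + (k : ℝ) ^ ζ) ^ p) * ENNReal.ofReal (‖h (t + s)‖ ^ p) :=
              ENNReal.ofReal_mul (by positivity)
      refine hmono.trans ?_
      rw [lintegral_const_mul' _ _ ENNReal.ofReal_ne_top]
      refine mul_le_mul_right ?_ _
      rw [htrans t k]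
      exact hunit _
    refine step1.trans ((ENNReal.tsum_le_tsum step2).trans ?_)
    rw [ENNReal.tsum_mul_right, ← ENNReal.ofReal_tsum_of_nonneg (fun k => by positivity) hsum,
      ← ENNReal.ofReal_mul hsum_nonneg, mul_comm]
  -- integrability
  have hinteg : ∀ t : ℝ,
      IntegrableOn (fun s => ‖h (t + s)‖ ^ p / (1 + |s| ^ ζ) ^ p) (Set.Iic 0) volume := by
    intro t
    refine ⟨(gsm t).restrict, ?_⟩
    rw [hasFiniteIntegral_iff_norm]
    have heq : ∫⁻ s in Set.Iic (0:ℝ),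
        ENNReal.ofReal ‖‖h (t + s)‖ ^ p / (1 + |s| ^ ζ) ^ p‖ =
        ∫⁻ s in Set.Iic (0:ℝ), ENNReal.ofReal (‖h (t + s)‖ ^ p / (1 + |s| ^ ζ) ^ p) :=
      lintegral_congr fun s => by rw [Real.norm_of_nonneg (gpos t s)]
    rw [heq]
    exact lt_of_le_of_lt (hkey t) ENNReal.ofReal_lt_top
  refine ⟨hsum, hinteg, fun t => ?_⟩
  rw [integral_eq_lintegral_of_nonneg_ae
    (Filter.Eventually.of_forall fun s => gpos t s) ((gsm t).restrict)]
  calc (∫⁻ s in Set.Iic (0:ℝ),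
        ENNReal.ofReal (‖h (t + s)‖ ^ p / (1 + |s| ^ ζ) ^ p)).toReal
      ≤ (ENNReal.ofReal (C ^ p * ∑' k : ℕ, 1 / (1 + (k : ℝ) ^ ζ) ^ p)).toReal :=
        ENNReal.toReal_mono ENNReal.ofReal_ne_top (hkey t)
    _ = C ^ p * ∑' k : ℕ, 1 / (1 + (k : ℝ) ^ ζ) ^ p :=
        ENNReal.toReal_ofReal (mul_nonneg (Real.rpow_nonneg hC0 _) hsum_nonneg)
end
end

section
/- Let X and Y be complex Banach spaces, let p > 1 with 1/p + 1/q = 1, and let (R(t))_{t>0} be a strongly continuous family of bounded linear operators from X to Y satisfying ‖R(t)‖_{L(X,Y)} ≤ M t^{β−1}/(1+t^γ) for all t > 0, where γ > 1, β ∈ (0,1], M > 0, and q(β−1) > −1. Let g : ℝ → X be Stepanov p-bounded. Then the function F(t) := ∫_t^∞ R(s) g(t−s) ds is well defined for every t ≥ 0, is continuous on [0,∞), and satisfies lim_{t→∞} ‖F(t)‖_Y = 0; that is, F belongs to C_0([0,∞):Y). -/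
open MeasureTheory Filter Set
open scoped ENNReal NNReal Topology

noncomputable section

/-! After the substitution `s = t + u`, `F t = ∫ u in Ioi 0, R (t + u) (g (-u))`. Since the bound
`w s = M s^(β-1) / (1 + s^γ)` on `‖R s‖` is decreasing, the integrand is dominated, uniformly in
`t ≥ 0`, by `w u * ‖g (-u)‖`. This majorant is integrable: by Hölder's inequality on each interval
`(k, k+1]` its integral is at most the Stepanov norm of `g` times `∑ₖ ‖w‖_{L^q(k, k+1)}`, which is
finite because `w^q` is integrable near `0` (as `q (β - 1) > -1`) and `w k = O(k^(β-1-γ))` with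
`β - 1 - γ < -1`. Continuity and decay of `F` then follow from dominated convergence, using the
strong continuity of `R` and `w (t + u) → 0` as `t → ∞`. -/

section Shift

variable {E : Type*} [NormedAddCommGroup E]

theorem integrableOn_Ioi_comp_add_left_iff (f : ℝ → E) (a t : ℝ) :
    IntegrableOn (fun u => f (t + u)) (Ioi a) ↔ IntegrableOn f (Ioi (t + a)) := by
  simpa [Function.comp_def] using (measurePreserving_add_left volume t).integrableOn_comp_preimage
    (MeasurableEquiv.addLeft t).measurableEmbedding (f := f) (s := Ioi (t + a))

theorem integral_comp_add_left_Ioi [NormedSpace ℝ E] (f : ℝ → E) (a t : ℝ) :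
    ∫ u in Ioi a, f (t + u) = ∫ s in Ioi (t + a), f s := by
  simpa using (measurePreserving_add_left volume t).setIntegral_preimage_emb
    (MeasurableEquiv.addLeft t).measurableEmbedding f (Ioi (t + a))

end Shift

theorem aestronglyMeasurable_apply_of_continuousOn {α 𝕜 E F : Type*} [MeasurableSpace α]
    [TopologicalSpace α] [SecondCountableTopology α] [OpensMeasurableSpace α]
    [NontriviallyNormedField 𝕜] [NormedAddCommGroup E] [NormedSpace 𝕜 E]
    [NormedAddCommGroup F] [NormedSpace 𝕜 F] {μ : Measure α} {s : Set α} (hs : MeasurableSet s)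
    {R : α → E →L[𝕜] F} (hR : ∀ x, ContinuousOn (fun t => R t x) s) {f : α → E}
    (hf : AEStronglyMeasurable f μ) :
    AEStronglyMeasurable (fun t => R t (f t)) (μ.restrict s) := by
  obtain ⟨G, hG, hfG⟩ := hf
  have hsimple (φ : SimpleFunc α E) :
      AEStronglyMeasurable (fun t => R t (φ t)) (μ.restrict s) := by
    induction φ using SimpleFunc.induction with
    | const c hA =>
      rename_i A
      convert ((hR c).aestronglyMeasurable hs).indicator hA using 1
      ext t
      by_cases ht : t ∈ A <;> simp [ht]
    | add _ hφ hψ =>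
      convert hφ.add hψ using 1
      ext t
      simp
  refine (aestronglyMeasurable_of_tendsto_ae atTop (fun n => hsimple (hG.approx n))
    (ae_of_all _ fun t => ((R t).continuous.tendsto _).comp (hG.tendsto_approx t))).congr ?_
  filter_upwards [ae_restrict_of_ae hfG] with t ht
  rw [ht]

theorem lintegral_Ioi_zero_le_tsum_Lp_mul_Lq {p q : ℝ} (hpq : p.HolderConjugate q)
    {f g : ℝ → ℝ≥0∞} (hf : AEMeasurable f (volume.restrict (Ioi 0)))
    (hg : AEMeasurable g (volume.restrict (Ioi 0))) :
    ∫⁻ u in Ioi 0, f u * g u ≤ ∑' k : ℕ,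
      (∫⁻ u in Ioc (k : ℝ) (k + 1), f u ^ p) ^ (1 / p) *
        (∫⁻ u in Ioc (k : ℝ) (k + 1), g u ^ q) ^ (1 / q) := by
  have hcover : ⋃ k : ℕ, Ioc (k : ℝ) (k + 1) = Ioi 0 := by
    have hunbdd : ¬BddAbove (range (Nat.cast : ℕ → ℝ)) := not_bddAbove_iff.2 fun x =>
      let ⟨n, hn⟩ := exists_nat_gt x; ⟨n, mem_range_self n, hn⟩
    simpa using iUnion_Ioc_map_succ_eq_Ioi (by simp) hunbdd
  have hdisj : Pairwise (Function.onFun Disjoint fun k : ℕ => Ioc (k : ℝ) (k + 1)) := by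
    simpa using Nat.mono_cast.pairwise_disjoint_on_Ioc_succ (β := ℝ)
  rw [← hcover, lintegral_iUnion (fun _ => measurableSet_Ioc) hdisj]
  refine ENNReal.tsum_le_tsum fun k => ?_
  have hk : volume.restrict (Ioc (k : ℝ) (k + 1)) ≤ volume.restrict (Ioi 0) :=
    Measure.restrict_mono (hcover ▸ subset_iUnion (fun k : ℕ => Ioc (k : ℝ) (k + 1)) k) le_rfl
  exact ENNReal.lintegral_mul_le_Lp_mul_Lq _ hpq (hf.mono_measure hk) (hg.mono_measure hk)

theorem lintegral_Ioc_rpow_le_of_le {q : ℝ} (hq : 0 < q) {f : ℝ → ℝ≥0∞} {a : ℝ} {c : ℝ≥0∞}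
    (hf : ∀ u ∈ Ioc a (a + 1), f u ≤ c) :
    (∫⁻ u in Ioc a (a + 1), f u ^ q) ^ (1 / q) ≤ c := by
  calc (∫⁻ u in Ioc a (a + 1), f u ^ q) ^ (1 / q)
      ≤ (∫⁻ _ in Ioc a (a + 1), c ^ q) ^ (1 / q) := by
        gcongr ?_ ^ _
        exact setLIntegral_mono measurable_const fun u hu => by gcongr; exact hf u hu
    _ = c := by
        rw [setLIntegral_const, Real.volume_Ioc, add_sub_cancel_left, ENNReal.ofReal_one, mul_one,
          ← ENNReal.rpow_mul, mul_one_div_cancel hq.ne', ENNReal.rpow_one]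

section Stepanov

variable {X : Type*} [NormedAddCommGroup X] {p : ℝ} {g : ℝ → X}

theorem LocLpOn.aestronglyMeasurable (hg : LocLpOn p univ g) : AEStronglyMeasurable g volume := by
  simpa using hg.1

theorem lintegral_Ioc_enorm_rpow_le_spNorm (hp : 0 < p)
    (hg : LocallyIntegrable (fun t => ‖g t‖ ^ p)) (a : ℝ) :
    (∫⁻ u in Ioc a (a + 1), ‖g u‖ₑ ^ p) ^ (1 / p) ≤ SpNorm p univ g := by
  have hint : IntegrableOn (fun u => ‖g u‖ ^ p) (Ioc a (a + 1)) :=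
    (hg.integrableOn_isCompact isCompact_Icc).mono_set Ioc_subset_Icc_self
  have hlint :
      ∫⁻ u in Ioc a (a + 1), ‖g u‖ₑ ^ p = ENNReal.ofReal (∫ s in a..a + 1, ‖g s‖ ^ p) := by
    rw [intervalIntegral.integral_of_le (by linarith),
      ofReal_integral_eq_lintegral_ofReal hint (ae_of_all _ fun u => by positivity)]
    simp only [← ofReal_norm, ENNReal.ofReal_rpow_of_nonneg (norm_nonneg _) hp.le]
  rw [hlint, ENNReal.ofReal_rpow_of_nonneg
    (intervalIntegral.integral_nonneg (by linarith) fun u _ => by positivity) (by positivity)]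
  exact le_iSup₂ (f := fun t (_ : t ∈ univ) =>
    ENNReal.ofReal ((∫ s in t..t + 1, ‖g s‖ ^ p) ^ (1 / p))) a (mem_univ a)

theorem lintegral_Ioc_enorm_comp_neg_rpow_le_spNorm (hp : 0 < p)
    (hg : LocallyIntegrable (fun t => ‖g t‖ ^ p)) (a : ℝ) :
    (∫⁻ u in Ioc a (a + 1), ‖g (-u)‖ₑ ^ p) ^ (1 / p) ≤ SpNorm p univ g := by
  have hpre : Neg.neg ⁻¹' Ico (-a - 1) (-a) = Ioc a (a + 1) := by
    simp [sub_eq_add_neg, add_comm]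
  have hrefl : ∫⁻ u in Ioc a (a + 1), ‖g (-u)‖ₑ ^ p =
      ∫⁻ v in Ioc (-a - 1) (-a - 1 + 1), ‖g v‖ₑ ^ p := by
    rw [← hpre, (Measure.measurePreserving_neg volume).setLIntegral_comp_preimage_emb
      (MeasurableEquiv.neg ℝ).measurableEmbedding (fun v => ‖g v‖ₑ ^ p),
      Measure.restrict_congr_set Ico_ae_eq_Ioc]
    ring_nf
  rw [hrefl]
  exact lintegral_Ioc_enorm_rpow_le_spNorm hp hg _

theorem integrableOn_mul_norm_comp_neg {q : ℝ} (hpq : p.HolderConjugate q)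
    (hg : LocLpOn p univ g) (hgS : SpNorm p univ g < ⊤) {w : ℝ → ℝ}
    (hw : AEMeasurable w (volume.restrict (Ioi 0)))
    (hw_sum : ∑' k : ℕ, (∫⁻ u in Ioc (k : ℝ) (k + 1), ‖w u‖ₑ ^ q) ^ (1 / q) < ⊤) :
    IntegrableOn (fun u => w u * ‖g (-u)‖) (Ioi 0) := by
  have hgm : AEStronglyMeasurable (fun u => g (-u)) volume :=
    hg.aestronglyMeasurable.comp_measurePreserving (Measure.measurePreserving_neg volume)
  have hgloc : LocallyIntegrable (fun t => ‖g t‖ ^ p) := locallyIntegrableOn_univ.1 hg.2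
  refine ⟨(hw.mul hgm.norm.aemeasurable.restrict).aestronglyMeasurable, ?_⟩
  calc ∫⁻ u in Ioi 0, ‖w u * ‖g (-u)‖‖ₑ = ∫⁻ u in Ioi 0, ‖w u‖ₑ * ‖g (-u)‖ₑ := by
        simp only [enorm_mul, enorm_norm]
    _ ≤ ∑' k : ℕ, (∫⁻ u in Ioc (k : ℝ) (k + 1), ‖w u‖ₑ ^ q) ^ (1 / q) *
          (∫⁻ u in Ioc (k : ℝ) (k + 1), ‖g (-u)‖ₑ ^ p) ^ (1 / p) :=
        lintegral_Ioi_zero_le_tsum_Lp_mul_Lq hpq.symm hw.enorm hgm.enorm.restrict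
    _ ≤ ∑' k : ℕ, (∫⁻ u in Ioc (k : ℝ) (k + 1), ‖w u‖ₑ ^ q) ^ (1 / q) * SpNorm p univ g := by
        gcongr with k
        exact lintegral_Ioc_enorm_comp_neg_rpow_le_spNorm hpq.pos hgloc k
    _ < ⊤ := by
        rw [ENNReal.tsum_mul_right]
        exact ENNReal.mul_lt_top hw_sum hgS

end Stepanov

def powerWeight (M β γ t : ℝ) : ℝ := M * t ^ (β - 1) / (1 + t ^ γ)

section PowerWeight

variable {M β γ : ℝ}

theorem powerWeight_nonneg (hM : 0 ≤ M) {t : ℝ} (ht : 0 ≤ t) : 0 ≤ powerWeight M β γ t := by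
  unfold powerWeight
  positivity

theorem enorm_powerWeight (hM : 0 ≤ M) {t : ℝ} (ht : 0 ≤ t) :
    ‖powerWeight M β γ t‖ₑ = ENNReal.ofReal (powerWeight M β γ t) :=
  Real.enorm_of_nonneg (powerWeight_nonneg hM ht)

theorem powerWeight_le_mul_rpow (hM : 0 ≤ M) {t : ℝ} (ht : 0 ≤ t) :
    powerWeight M β γ t ≤ M * t ^ (β - 1) :=
  div_le_self (by positivity) (le_add_of_nonneg_right (by positivity))

theorem powerWeight_le_mul_rpow_sub (hM : 0 ≤ M) {t : ℝ} (ht : 0 < t) :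
    powerWeight M β γ t ≤ M * t ^ (β - 1 - γ) :=
  calc powerWeight M β γ t ≤ M * t ^ (β - 1) / t ^ γ :=
        div_le_div_of_nonneg_left (by positivity) (by positivity) (by linarith)
    _ = M * t ^ (β - 1 - γ) := by rw [mul_div_assoc, ← Real.rpow_sub ht]

theorem continuousOn_powerWeight : ContinuousOn (powerWeight M β γ) (Ioi 0) := by
  have hrpow (r : ℝ) : ContinuousOn (fun t : ℝ => t ^ r) (Ioi 0) :=
    fun t ht => (Real.continuousAt_rpow_const t r (Or.inl (ne_of_gt ht))).continuousWithinAt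
  exact (continuousOn_const.mul (hrpow _)).div (continuousOn_const.add (hrpow γ))
    fun t (ht : 0 < t) => by positivity

theorem antitoneOn_powerWeight (hM : 0 ≤ M) (hβ : β ≤ 1) (hγ : 0 ≤ γ) :
    AntitoneOn (powerWeight M β γ) (Ioi 0) := by
  intro s (hs : 0 < s) t (ht : 0 < t) hst
  exact div_le_div₀ (by positivity)
    (mul_le_mul_of_nonneg_left (Real.rpow_le_rpow_of_nonpos hs hst (by linarith)) hM)
    (by positivity) (by gcongr)

theorem tendsto_powerWeight_atTop (hM : 0 ≤ M) (hβγ : β - 1 - γ < 0) :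
    Tendsto (powerWeight M β γ) atTop (𝓝 0) := by
  have hlim : Tendsto (fun t : ℝ => M * t ^ (β - 1 - γ)) atTop (𝓝 0) := by
    simpa using (tendsto_rpow_neg_atTop (neg_pos.2 hβγ)).const_mul M
  refine squeeze_zero' ?_ ?_ hlim
  · filter_upwards [eventually_ge_atTop 0] with t ht using powerWeight_nonneg hM ht
  · filter_upwards [eventually_gt_atTop 0] with t ht using powerWeight_le_mul_rpow_sub hM ht

theorem lintegral_Ioc_zero_one_enorm_powerWeight_rpow_lt_top {q : ℝ} (hq : 0 < q) (hM : 0 ≤ M)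
    (hqβ : -1 < q * (β - 1)) :
    ∫⁻ u in Ioc 0 1, ‖powerWeight M β γ u‖ₑ ^ q < ⊤ := by
  have hint : IntegrableOn (fun u : ℝ => (M * u ^ (β - 1)) ^ q) (Ioc 0 1) := by
    have hrpow : IntegrableOn (fun u : ℝ => M ^ q * u ^ (q * (β - 1))) (Ioc 0 1) :=
      (intervalIntegral.intervalIntegrable_rpow' hqβ).1.const_mul _
    refine hrpow.congr_fun (fun u (hu : 0 < u ∧ u ≤ 1) => ?_) measurableSet_Ioc
    rw [Real.mul_rpow hM (Real.rpow_nonneg hu.1.le _), ← Real.rpow_mul hu.1.le, mul_comm q]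
  refine lt_of_le_of_lt (setLIntegral_mono' measurableSet_Ioc fun u (hu : 0 < u ∧ u ≤ 1) => ?_)
    hint.lintegral_lt_top
  rw [enorm_powerWeight hM hu.1.le,
    ENNReal.ofReal_rpow_of_nonneg (powerWeight_nonneg hM hu.1.le) hq.le]
  gcongr
  · exact powerWeight_nonneg hM hu.1.le
  · exact powerWeight_le_mul_rpow hM hu.1.le

theorem summable_powerWeight_nat_add_one (hM : 0 ≤ M) (hβγ : β < γ) :
    Summable fun k : ℕ => powerWeight M β γ (k + 1) := by
  refine Summable.of_nonneg_of_le (fun k => powerWeight_nonneg hM (by positivity))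
    (fun k => powerWeight_le_mul_rpow_sub hM (by positivity)) ?_
  refine ((summable_nat_add_iff 1).2
    (Real.summable_nat_rpow.2 (by linarith : β - 1 - γ < -1))).mul_left M |>.congr fun k => ?_
  push_cast
  rfl

theorem tsum_lintegral_Ioc_enorm_powerWeight_rpow_lt_top {q : ℝ} (hq : 0 < q) (hM : 0 ≤ M)
    (hβ : β ≤ 1) (hγ : 1 < γ) (hqβ : -1 < q * (β - 1)) :
    ∑' k : ℕ, (∫⁻ u in Ioc (k : ℝ) (k + 1), ‖powerWeight M β γ u‖ₑ ^ q) ^ (1 / q) < ⊤ := by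
  rw [tsum_eq_zero_add' ENNReal.summable]
  refine ENNReal.add_lt_top.2 ⟨?_, ?_⟩
  · simpa using ENNReal.rpow_lt_top_of_nonneg (by positivity)
      (lintegral_Ioc_zero_one_enorm_powerWeight_rpow_lt_top (γ := γ) hq hM hqβ).ne
  · refine lt_of_le_of_lt (ENNReal.tsum_le_tsum fun k => ?_)
      (summable_powerWeight_nat_add_one hM (show β < γ by linarith)).tsum_ofReal_lt_top
    refine lintegral_Ioc_rpow_le_of_le hq fun u (hu : _ < u ∧ _) => ?_
    push_cast at hu
    have hk : (0 : ℝ) < k + 1 := by positivity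
    rw [enorm_powerWeight hM (by linarith)]
    exact ENNReal.ofReal_le_ofReal
      (antitoneOn_powerWeight hM hβ (by linarith) hk (hk.trans hu.1) hu.1.le)

end PowerWeight

section TailConvolution

variable {𝕜 X Y : Type*} [NontriviallyNormedField 𝕜] [NormedAddCommGroup X] [NormedSpace 𝕜 X]
  [NormedAddCommGroup Y] [NormedSpace 𝕜 Y] {R : ℝ → X →L[𝕜] Y} {w : ℝ → ℝ} {g : ℝ → X}

theorem aestronglyMeasurable_apply_add_comp_neg
    (hRsc : ∀ x, ContinuousOn (fun t => R t x) (Ioi 0)) (hg : AEStronglyMeasurable g volume)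
    {t : ℝ} (ht : 0 ≤ t) :
    AEStronglyMeasurable (fun u => R (t + u) (g (-u))) (volume.restrict (Ioi 0)) :=
  aestronglyMeasurable_apply_of_continuousOn measurableSet_Ioi
    (fun x => (hRsc x).comp (continuous_const_add t).continuousOn
      fun u (hu : 0 < u) => show 0 < t + u by linarith)
    (hg.comp_measurePreserving (Measure.measurePreserving_neg volume))

theorem ae_norm_apply_add_comp_neg_le (hR : ∀ t, 0 < t → ‖R t‖ ≤ w t)
    (hw : AntitoneOn w (Ioi 0)) {t : ℝ} (ht : 0 ≤ t) :
    ∀ᵐ u ∂volume.restrict (Ioi 0), ‖R (t + u) (g (-u))‖ ≤ w u * ‖g (-u)‖ :=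
  (ae_restrict_iff' measurableSet_Ioi).2 (ae_of_all _ fun u (hu : 0 < u) =>
    (R (t + u)).le_of_opNorm_le
      ((hR _ (by linarith)).trans (hw hu (show 0 < t + u by linarith) (by linarith))) _)

theorem integrableOn_apply_add_comp_neg (hRsc : ∀ x, ContinuousOn (fun t => R t x) (Ioi 0))
    (hR : ∀ t, 0 < t → ‖R t‖ ≤ w t) (hw : AntitoneOn w (Ioi 0))
    (hg : AEStronglyMeasurable g volume) (hwg : IntegrableOn (fun u => w u * ‖g (-u)‖) (Ioi 0))
    {t : ℝ} (ht : 0 ≤ t) :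
    IntegrableOn (fun u => R (t + u) (g (-u))) (Ioi 0) :=
  hwg.mono' (aestronglyMeasurable_apply_add_comp_neg hRsc hg ht)
    (ae_norm_apply_add_comp_neg_le hR hw ht)

variable [NormedSpace ℝ Y]

theorem continuousOn_integral_apply_add_comp_neg
    (hRsc : ∀ x, ContinuousOn (fun t => R t x) (Ioi 0))
    (hR : ∀ t, 0 < t → ‖R t‖ ≤ w t) (hw : AntitoneOn w (Ioi 0))
    (hg : AEStronglyMeasurable g volume) (hwg : IntegrableOn (fun u => w u * ‖g (-u)‖) (Ioi 0)) :
    ContinuousOn (fun t => ∫ u in Ioi 0, R (t + u) (g (-u))) (Ici 0) := by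
  refine continuousOn_of_dominated (fun t ht => aestronglyMeasurable_apply_add_comp_neg hRsc hg ht)
    (fun t ht => ae_norm_apply_add_comp_neg_le hR hw ht) hwg ?_
  refine (ae_restrict_iff' measurableSet_Ioi).2 (ae_of_all _ fun u (hu : 0 < u) => ?_)
  exact (hRsc _).comp (continuous_add_const u).continuousOn
    fun t (ht : 0 ≤ t) => show 0 < t + u by linarith

theorem tendsto_integral_apply_add_comp_neg_atTop
    (hRsc : ∀ x, ContinuousOn (fun t => R t x) (Ioi 0))
    (hR : ∀ t, 0 < t → ‖R t‖ ≤ w t) (hw : AntitoneOn w (Ioi 0)) (hw0 : Tendsto w atTop (𝓝 0))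
    (hg : AEStronglyMeasurable g volume) (hwg : IntegrableOn (fun u => w u * ‖g (-u)‖) (Ioi 0)) :
    Tendsto (fun t => ∫ u in Ioi 0, R (t + u) (g (-u))) atTop (𝓝 0) := by
  have hdom := tendsto_integral_filter_of_dominated_convergence (f := 0) _
    ((eventually_ge_atTop 0).mono fun t ht => aestronglyMeasurable_apply_add_comp_neg hRsc hg ht)
    ((eventually_ge_atTop 0).mono fun t ht => ae_norm_apply_add_comp_neg_le hR hw ht) hwg
    ((ae_restrict_iff' measurableSet_Ioi).2 (ae_of_all _ fun u (hu : 0 < u) => ?_))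
  · simpa using hdom
  have hlim : Tendsto (fun t => w (t + u) * ‖g (-u)‖) atTop (𝓝 0) := by
    simpa using (hw0.comp (tendsto_atTop_add_const_right _ u tendsto_id)).mul_const ‖g (-u)‖
  refine squeeze_zero_norm' ?_ hlim
  filter_upwards [eventually_gt_atTop 0] with t ht
  exact (R (t + u)).le_of_opNorm_le (hR _ (by linarith)) _

end TailConvolution

theorem tail_convolution_CZero_general {X Y : Type*}
    [NormedAddCommGroup X] [NormedSpace ℂ X]
    [NormedAddCommGroup Y] [NormedSpace ℂ Y]
    (p q : ℝ) (hp : 1 < p) (hpq : 1 / p + 1 / q = 1)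
    (M β γ : ℝ) (hM : 0 < M) (hβ : β ∈ Set.Ioc (0 : ℝ) 1) (hγ : 1 < γ)
    (hqβ : q * (β - 1) > -1)
    (R : ℝ → X →L[ℂ] Y)
    (hRsc : ∀ x : X, ContinuousOn (fun t => R t x) (Set.Ioi (0 : ℝ)))
    (hR : ∀ t : ℝ, 0 < t → ‖R t‖ ≤ M * t ^ (β - 1) / (1 + t ^ γ))
    (g : ℝ → X) (hgloc : LocLpOn p Set.univ g) (hgS : SpNorm p Set.univ g < ⊤)
    (F : ℝ → Y) (hF : ∀ t : ℝ, F t = ∫ s in Set.Ioi t, R s (g (t - s))) :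
    (∀ t : ℝ, 0 ≤ t → IntegrableOn (fun s => R s (g (t - s))) (Set.Ioi t) volume) ∧
      ContinuousOn F (Set.Ici 0) ∧
      Filter.Tendsto (fun t => ‖F t‖) Filter.atTop (nhds 0) := by
  have hpq' : p.HolderConjugate q :=
    Real.holderConjugate_iff.2 ⟨hp, by simpa only [one_div] using hpq⟩
  have hg : AEStronglyMeasurable g volume := hgloc.aestronglyMeasurable
  have hw : AntitoneOn (powerWeight M β γ) (Ioi 0) :=
    antitoneOn_powerWeight hM.le hβ.2 (by linarith)
  have hwg : IntegrableOn (fun u => powerWeight M β γ u * ‖g (-u)‖) (Ioi 0) :=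
    integrableOn_mul_norm_comp_neg hpq' hgloc hgS
      (continuousOn_powerWeight.aemeasurable measurableSet_Ioi)
      (tsum_lintegral_Ioc_enorm_powerWeight_rpow_lt_top hpq'.symm.pos hM.le hβ.2 hγ hqβ)
  have hF' (t : ℝ) : F t = ∫ u in Ioi 0, R (t + u) (g (-u)) := by
    simpa [hF] using (integral_comp_add_left_Ioi (fun s => R s (g (t - s))) 0 t).symm
  refine ⟨fun t ht => ?_, ?_, ?_⟩
  · simpa using (integrableOn_Ioi_comp_add_left_iff (fun s => R s (g (t - s))) 0 t).1
      (by simpa using integrableOn_apply_add_comp_neg hRsc hR hw hg hwg ht)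
  · exact (continuousOn_integral_apply_add_comp_neg hRsc hR hw hg hwg).congr fun t _ => hF' t
  · simpa [hF'] using (tendsto_integral_apply_add_comp_neg_atTop hRsc hR hw
      (tendsto_powerWeight_atTop hM.le (by linarith [hβ.2])) hg hwg).norm

/-- From the proof of Proposition 2.2: the tail convolution
`F(t) = ∫_t^∞ R(s) g(t-s) ds` is well defined, continuous on `[0,∞)` and vanishes
at `+∞`. -/
theorem tail_convolution_CZero {X Y : Type*}
    [NormedAddCommGroup X] [NormedSpace ℂ X] [CompleteSpace X]
    [NormedAddCommGroup Y] [NormedSpace ℂ Y] [CompleteSpace Y]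
    (p q : ℝ) (hp : 1 < p) (hpq : 1 / p + 1 / q = 1)
    (M β γ : ℝ) (hM : 0 < M) (hβ : β ∈ Set.Ioc (0 : ℝ) 1) (hγ : 1 < γ)
    (hqβ : q * (β - 1) > -1)
    (R : ℝ → X →L[ℂ] Y)
    (hRsc : ∀ x : X, ContinuousOn (fun t => R t x) (Set.Ioi (0 : ℝ)))
    (hR : ∀ t : ℝ, 0 < t → ‖R t‖ ≤ M * t ^ (β - 1) / (1 + t ^ γ))
    (g : ℝ → X) (hgloc : LocLpOn p Set.univ g) (hgS : SpNorm p Set.univ g < ⊤)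
    (F : ℝ → Y) (hF : ∀ t : ℝ, F t = ∫ s in Set.Ioi t, R s (g (t - s))) :
    (∀ t : ℝ, 0 ≤ t → IntegrableOn (fun s => R s (g (t - s))) (Set.Ioi t) volume) ∧
      ContinuousOn F (Set.Ici 0) ∧
      Filter.Tendsto (fun t => ‖F t‖) Filter.atTop (nhds 0) :=
  tail_convolution_CZero_general p q hp hpq M β γ hM hβ hγ hqβ R hRsc hR g hgloc hgS F hF
end
end

section
/- Let X and Y be complex Banach spaces and let (R(t))_{t>0} be a strongly continuous family of bounded linear operators from X to Y satisfying ‖R(t)‖_{L(X,Y)} ≤ M t^{β−1}/(1+t^γ) for all t > 0, where γ > 1, β ∈ (0,1], M > 0. If q₀ : [0,∞) → X is continuous and lim_{t→∞} ‖q₀(t)‖ = 0 (i.e., q₀ ∈ C_0([0,∞):X)), then the function Q(t) := ∫_0^t R(t−s) q₀(s) ds, t ≥ 0, is continuous on [0,∞) and satisfies lim_{t→∞} ‖Q(t)‖_Y = 0; that is, Q ∈ C_0([0,∞):Y). -/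
open MeasureTheory Filter Set
open scoped ENNReal NNReal Topology

noncomputable section

def phiAux (M β γ : ℝ) : ℝ → ℝ := fun t => M * t ^ (β - 1) / (1 + t ^ γ)

lemma phiAux_nonneg (M β γ : ℝ) (hM : 0 < M) {t : ℝ} (ht : 0 < t) : 0 ≤ phiAux M β γ t := by
  unfold phiAux
  have h1 : (0:ℝ) ≤ t ^ (β - 1) := Real.rpow_nonneg ht.le _
  have h2 : (0:ℝ) < t ^ γ := Real.rpow_pos_of_pos ht _
  positivity

lemma phiAux_contOn (M β γ : ℝ) : ContinuousOn (phiAux M β γ) (Set.Ioi 0) := by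
  intro t ht
  have ht' : (0:ℝ) < t := ht
  have h2 : (0:ℝ) < t ^ γ := Real.rpow_pos_of_pos ht' _
  apply ContinuousAt.continuousWithinAt
  apply ContinuousAt.div
  · exact continuousAt_const.mul (Real.continuousAt_rpow_const _ _ (Or.inl ht'.ne'))
  · exact continuousAt_const.add (Real.continuousAt_rpow_const _ _ (Or.inl ht'.ne'))
  · positivity

lemma phiAux_integrable (M β γ : ℝ) (hM : 0 < M) (hβ0 : 0 < β) (hβ1 : β ≤ 1) (hγ : 1 < γ) :
    IntegrableOn (phiAux M β γ) (Set.Ioi 0) := by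
  have h01 : IntegrableOn (phiAux M β γ) (Set.Ioc 0 1) := by
    have hi : IntegrableOn (fun t : ℝ => M * t ^ (β - 1)) (Set.Ioc (0:ℝ) 1) :=
      ((intervalIntegral.intervalIntegrable_rpow' (a := 0) (b := 1) (by linarith)).1).const_mul M
    refine hi.mono' ((phiAux_contOn M β γ).aestronglyMeasurable measurableSet_Ioi
      |>.mono_measure (Measure.restrict_mono Set.Ioc_subset_Ioi_self le_rfl)) ?_
    filter_upwards [ae_restrict_mem measurableSet_Ioc] with t ht
    have ht0 : (0:ℝ) < t := ht.1
    have h2 : (0:ℝ) < t ^ γ := Real.rpow_pos_of_pos ht0 _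
    rw [Real.norm_eq_abs, abs_of_nonneg (phiAux_nonneg M β γ hM ht0)]
    unfold phiAux
    have h3 : (0:ℝ) ≤ M * t ^ (β - 1) := by positivity
    exact div_le_self h3 (by linarith)
  have h1i : IntegrableOn (phiAux M β γ) (Set.Ioi 1) := by
    have hi : IntegrableOn (fun t : ℝ => M * t ^ (β - 1 - γ)) (Set.Ioi (1:ℝ)) :=
      (integrableOn_Ioi_rpow_of_lt (by linarith) one_pos).const_mul M
    refine hi.mono' ((phiAux_contOn M β γ).aestronglyMeasurable measurableSet_Ioi
      |>.mono_measure (Measure.restrict_mono (Set.Ioi_subset_Ioi zero_le_one) le_rfl)) ?_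
    filter_upwards [ae_restrict_mem measurableSet_Ioi] with t ht
    have ht0 : (0:ℝ) < t := lt_trans one_pos ht
    have h2 : (0:ℝ) < t ^ γ := Real.rpow_pos_of_pos ht0 _
    rw [Real.norm_eq_abs, abs_of_nonneg (phiAux_nonneg M β γ hM ht0)]
    unfold phiAux
    have h3 : (0:ℝ) ≤ M * t ^ (β - 1) := by positivity
    have h4 : M * t ^ (β - 1) / (1 + t ^ γ) ≤ M * t ^ (β - 1) / t ^ γ := by
      apply div_le_div_of_nonneg_left h3 h2 (by linarith)
    calc M * t ^ (β - 1) / (1 + t ^ γ) ≤ M * t ^ (β - 1) / t ^ γ := h4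
    _ = M * t ^ (β - 1 - γ) := by
        rw [Real.rpow_sub ht0 (β-1) γ, mul_div_assoc]
  have := h01.union h1i
  rwa [Set.Ioc_union_Ioi_eq_Ioi zero_le_one] at this

lemma strong_cont_apply {X Y : Type*} [NormedAddCommGroup X] [NormedSpace ℂ X]
    [NormedAddCommGroup Y] [NormedSpace ℂ Y]
    (R : ℝ → X →L[ℂ] Y) (φ : ℝ → ℝ)
    (hRsc : ∀ x : X, ContinuousOn (fun t => R t x) (Set.Ioi (0:ℝ)))
    (hφ : ContinuousOn φ (Set.Ioi 0))
    (hb : ∀ t : ℝ, 0 < t → ‖R t‖ ≤ φ t)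
    (v : ℝ → X) (s : Set ℝ) (hs : s ⊆ Set.Ioi 0) (hv : ContinuousOn v s) :
    ContinuousOn (fun u => R u (v u)) s := by
  intro u₀ hu₀
  have h1 : Tendsto (fun u => R u (v u) - R u (v u₀)) (𝓝[s] u₀) (𝓝 0) := by
    have hlim : Tendsto (fun u => φ u * ‖v u - v u₀‖) (𝓝[s] u₀) (𝓝 (φ u₀ * ‖v u₀ - v u₀‖)) := by
      exact ((hφ.mono hs) u₀ hu₀).tendsto.mul (((hv u₀ hu₀).sub continuousWithinAt_const).norm)
    rw [sub_self, norm_zero, mul_zero] at hlim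
    apply squeeze_zero_norm' _ hlim
    filter_upwards [self_mem_nhdsWithin] with u hu
    calc ‖R u (v u) - R u (v u₀)‖ = ‖R u (v u - v u₀)‖ := by rw [map_sub]
    _ ≤ ‖R u‖ * ‖v u - v u₀‖ := (R u).le_opNorm _
    _ ≤ φ u * ‖v u - v u₀‖ := by
        apply mul_le_mul_of_nonneg_right (hb u (hs hu)) (norm_nonneg _)
  have h2 : Tendsto (fun u => R u (v u₀)) (𝓝[s] u₀) (𝓝 (R u₀ (v u₀))) :=
    ((hRsc (v u₀)) u₀ (hs hu₀)).mono hs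
  have := h1.add h2
  rw [zero_add] at this
  exact this.congr (fun u => sub_add_cancel _ _)


/-- Remark 2.4: if `q₀ ∈ C_0([0,∞):X)` and `(R(t))_{t>0}` satisfies the growth
bound, then `Q(t) = ∫_0^t R(t-s) q₀(s) ds` belongs to `C_0([0,∞):Y)`. -/
theorem finite_convolution_CZero {X Y : Type*}
    [NormedAddCommGroup X] [NormedSpace ℂ X] [CompleteSpace X]
    [NormedAddCommGroup Y] [NormedSpace ℂ Y] [CompleteSpace Y]
    (M β γ : ℝ) (hM : 0 < M) (hβ : β ∈ Set.Ioc (0 : ℝ) 1) (hγ : 1 < γ)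
    (R : ℝ → X →L[ℂ] Y)
    (hRsc : ∀ x : X, ContinuousOn (fun t => R t x) (Set.Ioi (0 : ℝ)))
    (hR : ∀ t : ℝ, 0 < t → ‖R t‖ ≤ M * t ^ (β - 1) / (1 + t ^ γ))
    (q₀ : ℝ → X) (hq₀c : ContinuousOn q₀ (Set.Ici 0))
    (hq₀0 : Filter.Tendsto (fun t => ‖q₀ t‖) Filter.atTop (nhds 0))
    (Q : ℝ → Y) (hQ : ∀ t : ℝ, Q t = ∫ s in (0 : ℝ)..t, R (t - s) (q₀ s)) :
    ContinuousOn Q (Set.Ici 0) ∧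
      Filter.Tendsto (fun t => ‖Q t‖) Filter.atTop (nhds 0) := by
  obtain ⟨hβ0, hβ1⟩ := hβ
  have hR' : ∀ t : ℝ, 0 < t → ‖R t‖ ≤ phiAux M β γ t := hR
  have hφc := phiAux_contOn M β γ
  have hφint := phiAux_integrable M β γ hM hβ0 hβ1 hγ
  -- uniform bound K for q₀ on [0,∞)
  obtain ⟨T₀, hT₀⟩ := Metric.tendsto_atTop.1 hq₀0 1 one_pos
  obtain ⟨K₁, hK₁⟩ := (isCompact_Icc (a := (0:ℝ)) (b := max T₀ 0)).exists_bound_of_continuousOn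
    (hq₀c.mono (fun x hx => hx.1))
  set K := max K₁ 1 with hKdef
  have hK0 : (0:ℝ) < K := lt_of_lt_of_le one_pos (le_max_right _ _)
  have hK : ∀ s : ℝ, 0 ≤ s → ‖q₀ s‖ ≤ K := by
    intro s hs
    rcases le_or_gt s (max T₀ 0) with h | h
    · exact (hK₁ s ⟨hs, h⟩).trans (le_max_left _ _)
    · have h2 := hT₀ s (le_of_lt (lt_of_le_of_lt (le_max_left T₀ 0) h))
      rw [Real.dist_eq, sub_zero, abs_of_nonneg (norm_nonneg _)] at h2
      exact h2.le.trans (le_max_right _ _)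
  -- the function g
  set g : ℝ → ℝ → Y := fun t => Set.indicator (Set.Ioo 0 t) (fun u => R u (q₀ (t - u)))
    with hgdef
  have hgmeas : ∀ t : ℝ, AEStronglyMeasurable (g t) (volume.restrict (Set.Ioi 0)) := by
    intro t
    have hcont : ContinuousOn (fun u => R u (q₀ (t - u))) (Set.Ioo 0 t) := by
      apply strong_cont_apply R (phiAux M β γ) hRsc hφc hR' _ _ (fun u hu => hu.1)
      exact hq₀c.comp ((continuous_const.sub continuous_id).continuousOn)
        (fun u hu => by simp only [Set.mem_Ici]; linarith [hu.2])
    rw [hgdef]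
    rw [aestronglyMeasurable_indicator_iff measurableSet_Ioo,
      Measure.restrict_restrict measurableSet_Ioo,
      Set.inter_eq_left.mpr (fun u hu => hu.1)]
    exact hcont.aestronglyMeasurable measurableSet_Ioo
  have hgbound : ∀ t : ℝ, ∀ u ∈ Set.Ioi (0:ℝ), ‖g t u‖ ≤ K * phiAux M β γ u := by
    intro t u hu
    have hu0 : (0:ℝ) < u := hu
    have hφn := phiAux_nonneg M β γ hM hu0
    by_cases h : u ∈ Set.Ioo 0 t
    · rw [hgdef]
      simp only [Set.indicator_of_mem h]
      calc ‖R u (q₀ (t - u))‖ ≤ ‖R u‖ * ‖q₀ (t - u)‖ := (R u).le_opNorm _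
      _ ≤ phiAux M β γ u * K :=
          mul_le_mul (hR' u hu0) (hK _ (by linarith [h.2])) (norm_nonneg _) hφn
      _ = K * phiAux M β γ u := mul_comm _ _
    · rw [hgdef]
      simp only [Set.indicator_of_notMem h, norm_zero]
      exact mul_nonneg hK0.le hφn
  have hKφint : IntegrableOn (fun u => K * phiAux M β γ u) (Set.Ioi 0) := hφint.const_mul K
  have hgint : ∀ t : ℝ, IntegrableOn (g t) (Set.Ioi 0) := by
    intro t
    refine hKφint.mono' (hgmeas t) ?_
    filter_upwards [ae_restrict_mem measurableSet_Ioi] with u hu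
    exact hgbound t u hu
  -- the identity
  have hQeq : ∀ t : ℝ, 0 ≤ t → Q t = ∫ u in Set.Ioi (0:ℝ), g t u := by
    intro t ht
    rw [hQ t]
    have h2 := intervalIntegral.integral_comp_sub_left (a := 0) (b := t)
      (fun u => R u (q₀ (t - u))) t
    simp only [sub_sub_cancel, sub_self, sub_zero] at h2
    rw [h2, intervalIntegral.integral_of_le ht, MeasureTheory.integral_Ioc_eq_integral_Ioo]
    rw [hgdef]
    rw [setIntegral_indicator measurableSet_Ioo, Set.inter_eq_right.mpr (fun u hu => hu.1)]
  -- continuity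
  have hGcont : ∀ t₀ : ℝ, 0 ≤ t₀ → ContinuousAt (fun t => ∫ u in Set.Ioi (0:ℝ), g t u) t₀ := by
    intro t₀ ht₀
    apply continuousAt_of_dominated (bound := fun u => K * phiAux M β γ u)
    · exact Filter.Eventually.of_forall hgmeas
    · refine Filter.Eventually.of_forall (fun t => ?_)
      filter_upwards [ae_restrict_mem measurableSet_Ioi] with u hu
      exact hgbound t u hu
    · exact hKφint
    · have hne : ∀ᵐ u ∂(volume.restrict (Set.Ioi (0:ℝ))), u ≠ t₀ := by
        refine ae_restrict_of_ae ?_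
        rw [ae_iff]
        have : {u : ℝ | ¬u ≠ t₀} = {t₀} := by ext u; simp
        rw [this]
        exact Real.volume_singleton
      filter_upwards [hne, ae_restrict_mem measurableSet_Ioi] with u hu hu0
      rcases lt_or_gt_of_ne hu with h | h
      · have heq : (fun t => g t u) =ᶠ[𝓝 t₀] fun t => R u (q₀ (t - u)) := by
          filter_upwards [eventually_gt_nhds h] with t ht
          have hmem : u ∈ Set.Ioo 0 t := ⟨hu0, ht⟩
          simp only [hgdef]
          exact Set.indicator_of_mem hmem _
        rw [continuousAt_congr heq]
        have hq : ContinuousAt q₀ (t₀ - u) := hq₀c.continuousAt (Ici_mem_nhds (by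
          simp only [Set.mem_Ioi] at hu0; linarith))
        have h7 : Tendsto (fun t : ℝ => t - u) (𝓝 t₀) (𝓝 (t₀ - u)) :=
          ((continuous_id.sub continuous_const).tendsto t₀)
        have h8 : Tendsto (fun t : ℝ => q₀ (t - u)) (𝓝 t₀) (𝓝 (q₀ (t₀ - u))) :=
          hq.tendsto.comp h7
        exact ((R u).continuous.tendsto _).comp h8
      · have heq : (fun t => g t u) =ᶠ[𝓝 t₀] fun _ => 0 := by
          filter_upwards [eventually_lt_nhds h] with t ht
          rw [hgdef]
          exact Set.indicator_of_notMem (fun hmem => absurd hmem.2 (not_lt.2 ht.le)) _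
        rw [continuousAt_congr heq]
        exact continuousAt_const
  have hQcont : ContinuousOn Q (Set.Ici 0) := by
    intro t₀ ht₀
    exact ((hGcont t₀ ht₀).continuousWithinAt).congr (fun t ht => hQeq t ht) (hQeq t₀ ht₀)
  refine ⟨hQcont, ?_⟩
  -- vanishing at infinity
  set C := ∫ u in Set.Ioi (0:ℝ), phiAux M β γ u with hCdef
  have hC : (0:ℝ) ≤ C :=
    setIntegral_nonneg measurableSet_Ioi (fun u hu => phiAux_nonneg M β γ hM hu)
  have htail : Tendsto (fun b : ℝ => ∫ u in Set.Ioi b, phiAux M β γ u) atTop (𝓝 0) := by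
    have h1 : Tendsto (fun b : ℝ => ∫ u in (0:ℝ)..b, phiAux M β γ u) atTop (𝓝 C) :=
      intervalIntegral_tendsto_integral_Ioi 0 hφint tendsto_id
    have h2 : ∀ᶠ b : ℝ in atTop,
        C - ∫ u in (0:ℝ)..b, phiAux M β γ u = ∫ u in Set.Ioi b, phiAux M β γ u := by
      filter_upwards [eventually_gt_atTop 0] with b hb
      have hsplit : C = (∫ u in Set.Ioc 0 b, phiAux M β γ u) + ∫ u in Set.Ioi b, phiAux M β γ u := by
        rw [← setIntegral_union (Set.Ioc_disjoint_Ioi le_rfl) measurableSet_Ioi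
          (hφint.mono_set Set.Ioc_subset_Ioi_self) (hφint.mono_set (Set.Ioi_subset_Ioi hb.le)),
          Set.Ioc_union_Ioi_eq_Ioi hb.le]
      rw [intervalIntegral.integral_of_le hb.le, hsplit]
      ring
    have h3 : Tendsto (fun b : ℝ => C - ∫ u in (0:ℝ)..b, phiAux M β γ u) atTop (𝓝 (C - C)) :=
      tendsto_const_nhds.sub h1
    rw [sub_self] at h3
    exact h3.congr' h2
  rw [Metric.tendsto_atTop]
  intro ε hε
  have hε' : 0 < ε / (2 * (C + 1)) := by positivity
  obtain ⟨T₁, hT₁⟩ := Metric.tendsto_atTop.1 hq₀0 (ε / (2 * (C + 1))) hε'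
  have hε'' : 0 < ε / (4 * K) := by positivity
  obtain ⟨T₂, hT₂⟩ := Metric.tendsto_atTop.1 htail (ε / (4 * K)) hε''
  set A := max T₂ 0 + 1 with hAdef
  set B := max T₁ 0 with hBdef
  refine ⟨B + A, fun t ht => ?_⟩
  have hA0 : (0:ℝ) < A := by positivity
  have hB0 : (0:ℝ) ≤ B := le_max_right _ _
  have ht0 : (0:ℝ) ≤ t := by linarith
  have hd : dist ‖Q t‖ 0 = ‖Q t‖ := by
    rw [Real.dist_eq, sub_zero, abs_of_nonneg (norm_nonneg _)]
  rw [hd, hQeq t ht0]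
  have hgn : IntegrableOn (fun u => ‖g t u‖) (Set.Ioi 0) := (hgint t).norm
  have hsplitI : ∫ u in Set.Ioi (0:ℝ), ‖g t u‖ =
      (∫ u in Set.Ioc 0 A, ‖g t u‖) + ∫ u in Set.Ioi A, ‖g t u‖ := by
    rw [← setIntegral_union (Set.Ioc_disjoint_Ioi le_rfl) measurableSet_Ioi
      (hgn.mono_set Set.Ioc_subset_Ioi_self)
      (hgn.mono_set (Set.Ioi_subset_Ioi hA0.le)),
      Set.Ioc_union_Ioi_eq_Ioi hA0.le]
  have h1 : (∫ u in Set.Ioc 0 A, ‖g t u‖) ≤ (ε / (2 * (C + 1))) * C := by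
    have hb1 : ∀ u ∈ Set.Ioc (0:ℝ) A, ‖g t u‖ ≤ (ε / (2 * (C + 1))) * phiAux M β γ u := by
      intro u hu
      have hu0 : (0:ℝ) < u := hu.1
      have hφn := phiAux_nonneg M β γ hM hu0
      by_cases h : u ∈ Set.Ioo 0 t
      · simp only [hgdef, Set.indicator_of_mem h]
        have hq : ‖q₀ (t - u)‖ ≤ ε / (2 * (C + 1)) := by
          have hTle : T₁ ≤ t - u := by
            have := le_max_left T₁ 0
            have hu2 := hu.2
            simp only [hAdef, hBdef] at ht hu2 ⊢
            linarith
          have h5 := hT₁ (t - u) hTle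
          rw [Real.dist_eq, sub_zero, abs_of_nonneg (norm_nonneg _)] at h5
          exact h5.le
        calc ‖R u (q₀ (t - u))‖ ≤ ‖R u‖ * ‖q₀ (t - u)‖ := (R u).le_opNorm _
        _ ≤ phiAux M β γ u * (ε / (2 * (C + 1))) :=
            mul_le_mul (hR' u hu0) hq (norm_nonneg _) hφn
        _ = _ := mul_comm _ _
      · simp only [hgdef, Set.indicator_of_notMem h, norm_zero]
        exact mul_nonneg hε'.le hφn
    calc (∫ u in Set.Ioc 0 A, ‖g t u‖)
        ≤ ∫ u in Set.Ioc 0 A, (ε / (2 * (C + 1))) * phiAux M β γ u :=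
          setIntegral_mono_on (hgn.mono_set Set.Ioc_subset_Ioi_self)
            (IntegrableOn.mono_set (hφint.const_mul _) Set.Ioc_subset_Ioi_self) measurableSet_Ioc hb1
    _ = (ε / (2 * (C + 1))) * ∫ u in Set.Ioc 0 A, phiAux M β γ u := integral_const_mul _ _
    _ ≤ (ε / (2 * (C + 1))) * C := by
        apply mul_le_mul_of_nonneg_left _ hε'.le
        exact setIntegral_mono_set hφint
          ((ae_restrict_mem measurableSet_Ioi).mono (fun u hu => phiAux_nonneg M β γ hM hu))
          (HasSubset.Subset.eventuallyLE Set.Ioc_subset_Ioi_self)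
  have h2 : (∫ u in Set.Ioi A, ‖g t u‖) ≤ K * (ε / (4 * K)) := by
    have htail2 : (∫ u in Set.Ioi A, phiAux M β γ u) ≤ ε / (4 * K) := by
      have h6 := hT₂ A (by simp only [hAdef]; linarith [le_max_left T₂ (0:ℝ)])
      rw [Real.dist_eq, sub_zero] at h6
      exact (le_abs_self _).trans h6.le
    calc (∫ u in Set.Ioi A, ‖g t u‖)
        ≤ ∫ u in Set.Ioi A, K * phiAux M β γ u :=
          setIntegral_mono_on (hgn.mono_set (Set.Ioi_subset_Ioi hA0.le))
            (hKφint.mono_set (Set.Ioi_subset_Ioi hA0.le)) measurableSet_Ioi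
            (fun u hu => hgbound t u (Set.Ioi_subset_Ioi hA0.le hu))
    _ = K * ∫ u in Set.Ioi A, phiAux M β γ u := integral_const_mul _ _
    _ ≤ K * (ε / (4 * K)) := mul_le_mul_of_nonneg_left htail2 hK0.le
  calc ‖∫ u in Set.Ioi (0:ℝ), g t u‖
      ≤ ∫ u in Set.Ioi (0:ℝ), ‖g t u‖ := norm_integral_le_integral_norm _
  _ = _ := hsplitI
  _ ≤ (ε / (2 * (C + 1))) * C + K * (ε / (4 * K)) := add_le_add h1 h2
  _ < ε := by
      have e1 : (ε / (2 * (C + 1))) * C < ε / 2 := by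
        rw [div_mul_eq_mul_div, div_lt_div_iff₀ (by positivity) (by norm_num)]
        nlinarith
      have e2 : K * (ε / (4 * K)) = ε / 4 := by
        field_simp
      linarith
end
end

section
/- Let X and Y be complex Banach spaces, let p > 1 with 1/p + 1/q = 1, and let (R(t))_{t>0} be a strongly continuous family of bounded linear operators from X to Y satisfying ‖R(t)‖_{L(X,Y)} ≤ M t^{β−1}/(1+t^γ) for all t > 0, where γ > 1, β ∈ (0,1], M > 0, and q(β−1) > −1. Fix ζ with 1/p < ζ < 1/p + γ − β, let g : ℝ → X be Stepanov p-bounded, and set G(t) := ∫_{−∞}^t R(t−s) g(s) ds for t ∈ ℝ. Then for every τ ∈ ℝ and every l > 0, sup_{x∈ℝ} ((1/l) ∫_x^{x+l} ‖G(t+τ) − G(t)‖_Y^p dt)^{1/p} ≤ M · ‖s ↦ s^{β−1}(1+s^ζ)/(1+s^γ)‖_{L^q((0,∞))} · (∫_0^∞ (1+s^ζ)^{−p} ds)^{1/p} · sup_{x∈ℝ} ((1/l) ∫_x^{x+l} ‖g(t+τ) − g(t)‖^p dt)^{1/p}. -/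
open MeasureTheory Filter Set
open scoped ENNReal NNReal Topology

noncomputable section

/-!
The substitution `r = t - s` gives `G t = ∫_{r>0} R r (g (t - r))`, so `G (t + τ) - G t` is the
same convolution applied to `Δ = g (· + τ) - g`. Split the kernel bound as `‖R r‖ ≤ ψ r * w r`
with `ψ r = M r^(β-1) (1 + r^ζ) / (1 + r^γ)` in `L^q(0,∞)` and `w r = 1 / (1 + r^ζ)` in
`L^p(0,∞)`. Hölder's inequality gives
`‖G (t + τ) - G t‖^p ≤ ‖ψ‖_q^p ∫_{r>0} w(r)^p ‖Δ (t - r)‖^p dr`,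
and integrating over a window `(x, x + l]` and exchanging the integrals bounds the window mean of
the left side by `‖ψ‖_q^p ‖w‖_p^p` times the supremum of the window means of `‖Δ‖^p`.
The same Hölder step shows that the convolution integral converges: `w` is decreasing with
`∑ w(n)^p < ∞`, so `∫_{r>0} w(r)^p ‖g (t - r)‖^p dr ≤ (∑ w(n)^p) ‖g‖_{S^p}^p`.
-/

lemma Ioi_zero_subset_iUnion_Ioc_natCast : Ioi (0 : ℝ) ⊆ ⋃ n : ℕ, Ioc (n : ℝ) (n + 1) := by
  intro x (hx : 0 < x)
  obtain ⟨n, hn⟩ := Nat.exists_eq_add_one.mpr (Nat.ceil_pos.mpr hx)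
  have hlt := Nat.ceil_lt_add_one hx.le
  have hle := Nat.le_ceil x
  rw [hn] at hlt hle
  push_cast at hlt hle
  exact mem_iUnion.mpr ⟨n, by linarith, hle⟩

section Translation

lemma setLIntegral_Ioc_comp_sub_right (u : ℝ → ℝ≥0∞) (a b r : ℝ) :
    ∫⁻ t in Ioc a b, u (t - r) = ∫⁻ t in Ioc (a - r) (b - r), u t := by
  have := (measurePreserving_sub_right volume r).setLIntegral_comp_preimage_emb
    (MeasurableEquiv.subRight r).measurableEmbedding u (Ioc (a - r) (b - r))
  rwa [preimage_sub_const_Ioc, sub_add_cancel, sub_add_cancel] at this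

lemma setLIntegral_Ioc_comp_sub_left (u : ℝ → ℝ≥0∞) (a b t : ℝ) :
    ∫⁻ r in Ioc a b, u (t - r) = ∫⁻ s in Ioc (t - b) (t - a), u s := by
  have := (Measure.measurePreserving_sub_left volume t).setLIntegral_comp_preimage_emb
    (MeasurableEquiv.subLeft t).measurableEmbedding u (Ico (t - b) (t - a))
  rw [preimage_const_sub_Ico, sub_sub_cancel, sub_sub_cancel] at this
  rw [this, Measure.restrict_congr_set Ico_ae_eq_Ioc]

lemma setIntegral_Iic_comp_sub_left {E : Type*} [NormedAddCommGroup E] [NormedSpace ℝ E]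
    (F : ℝ → E) (t : ℝ) : ∫ s in Iic t, F (t - s) = ∫ r in Ioi 0, F r := by
  have := (Measure.measurePreserving_sub_left volume t).setIntegral_preimage_emb
    (MeasurableEquiv.subLeft t).measurableEmbedding F (Ici 0)
  rw [preimage_const_sub_Ici, sub_zero] at this
  rw [this, integral_Ici_eq_integral_Ioi]

variable {v u : ℝ → ℝ≥0∞} {C : ℝ≥0∞}

lemma setLIntegral_Ioi_mul_comp_sub_le_tsum (hv : AntitoneOn v (Ici 0)) (hu : AEMeasurable u)
    (hC : ∀ y, ∫⁻ s in Ioc y (y + 1), u s ≤ C) (t : ℝ) :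
    ∫⁻ r in Ioi 0, v r * u (t - r) ≤ (∑' n : ℕ, v n) * C := by
  have hpiece (n : ℕ) : ∫⁻ r in Ioc (n : ℝ) (n + 1), v r * u (t - r) ≤ v n * C := by
    have hn : (n : ℝ) ∈ Ici 0 := mem_Ici.mpr (Nat.cast_nonneg n)
    calc ∫⁻ r in Ioc (n : ℝ) (n + 1), v r * u (t - r)
        ≤ ∫⁻ r in Ioc (n : ℝ) (n + 1), v n * u (t - r) :=
          setLIntegral_mono' measurableSet_Ioc fun r hr =>
            mul_le_mul_left (hv hn (mem_Ici.mpr (hn.trans hr.1.le)) hr.1.le) _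
      _ = v n * ∫⁻ r in Ioc (n : ℝ) (n + 1), u (t - r) :=
          lintegral_const_mul'' _
            (hu.comp_quasiMeasurePreserving (quasiMeasurePreserving_sub_left volume t)).restrict
      _ ≤ v n * C := by
          rw [setLIntegral_Ioc_comp_sub_left]
          gcongr
          simpa [sub_add_eq_add_sub, add_sub_add_right_eq_sub] using hC (t - (n + 1))
  calc ∫⁻ r in Ioi 0, v r * u (t - r)
      ≤ ∫⁻ r in ⋃ n : ℕ, Ioc (n : ℝ) (n + 1), v r * u (t - r) :=
        lintegral_mono_set Ioi_zero_subset_iUnion_Ioc_natCast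
    _ ≤ ∑' n : ℕ, ∫⁻ r in Ioc (n : ℝ) (n + 1), v r * u (t - r) := lintegral_iUnion_le _ _
    _ ≤ ∑' n : ℕ, v n * C := ENNReal.tsum_le_tsum hpiece
    _ = (∑' n : ℕ, v n) * C := ENNReal.tsum_mul_right

lemma setLIntegral_Ioc_setLIntegral_mul_comp_sub_le {S : Set ℝ} {l : ℝ}
    (hv : AEMeasurable v (volume.restrict S)) (hu : AEMeasurable u)
    (hC : ∀ y, ∫⁻ s in Ioc y (y + l), u s ≤ C) (x : ℝ) :
    ∫⁻ t in Ioc x (x + l), ∫⁻ r in S, v r * u (t - r) ≤ (∫⁻ r in S, v r) * C := by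
  have hmeas : AEMeasurable (Function.uncurry fun t r => v r * u (t - r))
      ((volume.restrict (Ioc x (x + l))).prod (volume.restrict S)) := by
    refine hv.comp_snd.mul ?_
    rw [Measure.prod_restrict]
    exact (hu.comp_quasiMeasurePreserving (quasiMeasurePreserving_sub volume volume)).restrict
  rw [lintegral_lintegral_swap hmeas]
  calc ∫⁻ r in S, ∫⁻ t in Ioc x (x + l), v r * u (t - r)
      = ∫⁻ r in S, v r * ∫⁻ t in Ioc x (x + l), u (t - r) := by
        refine lintegral_congr fun r => lintegral_const_mul'' _ ?_
        exact (hu.comp_quasiMeasurePreserving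
          (measurePreserving_sub_right volume r).quasiMeasurePreserving).restrict
    _ ≤ ∫⁻ r in S, v r * C := by
        gcongr with r
        rw [setLIntegral_Ioc_comp_sub_right, add_sub_right_comm]
        exact hC (x - r)
    _ = (∫⁻ r in S, v r) * C := lintegral_mul_const'' _ hv

end Translation

section Stepanov

variable {X : Type*} [NormedAddCommGroup X] {p l : ℝ}

lemma ofReal_rpow_one_div_mean_le_iff {v : ℝ} {A : ℝ≥0∞} (hp : 0 < p) (hl : 0 < l)
    (hv : 0 ≤ v) :
    ENNReal.ofReal ((1 / l * v) ^ (1 / p)) ≤ A ↔ ENNReal.ofReal v ≤ ENNReal.ofReal l * A ^ p := by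
  rw [← ENNReal.ofReal_rpow_of_nonneg (by positivity) (by positivity),
    one_div p, ENNReal.rpow_inv_le_iff hp, one_div_mul_eq_div, ENNReal.ofReal_div_of_pos hl,
    ENNReal.div_le_iff_le_mul (Or.inl (by simpa using hl)) (Or.inl ENNReal.ofReal_ne_top),
    mul_comm]

lemma ofReal_intervalIntegral_norm_rpow {h : ℝ → X} {a b : ℝ} (hp : 0 ≤ p) (hab : a ≤ b)
    (hh : IntervalIntegrable (fun t => ‖h t‖ ^ p) volume a b) :
    ENNReal.ofReal (∫ t in a..b, ‖h t‖ ^ p) = ∫⁻ t in Ioc a b, ‖h t‖ₑ ^ p := by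
  rw [intervalIntegral.integral_of_le hab, ofReal_integral_eq_lintegral_ofReal
    ((intervalIntegrable_iff_integrableOn_Ioc_of_le hab).mp hh)
    (Eventually.of_forall fun t => by positivity)]
  congr! 2 with t
  rw [← ENNReal.ofReal_rpow_of_nonneg (norm_nonneg _) hp, ofReal_norm]

lemma ofReal_intervalIntegral_norm_rpow_le (h : ℝ → X) {a b : ℝ} (hp : 0 ≤ p) (hab : a ≤ b) :
    ENNReal.ofReal (∫ t in a..b, ‖h t‖ ^ p) ≤ ∫⁻ t in Ioc a b, ‖h t‖ₑ ^ p := by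
  by_cases hh : IntervalIntegrable (fun t => ‖h t‖ ^ p) volume a b
  · exact (ofReal_intervalIntegral_norm_rpow hp hab hh).le
  · simp [intervalIntegral.integral_undef hh]

lemma setLIntegral_Ioc_le_DS {f g : ℝ → X} (hp : 0 < p) (hl : 0 < l) {x : ℝ}
    (hfg : IntervalIntegrable (fun t => ‖f t - g t‖ ^ p) volume x (x + l)) :
    ∫⁻ t in Ioc x (x + l), ‖f t - g t‖ₑ ^ p ≤ ENNReal.ofReal l * DS p l univ f g ^ p := by
  rw [← ofReal_intervalIntegral_norm_rpow hp.le (by linarith) hfg,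
    ← ofReal_rpow_one_div_mean_le_iff hp hl
      (intervalIntegral.integral_nonneg (by linarith) fun t _ => by positivity)]
  exact le_biSup (fun x => ENNReal.ofReal ((1 / l * ∫ t in x..x + l, ‖f t - g t‖ ^ p) ^ (1 / p)))
    (mem_univ x)

lemma DS_le_of_setLIntegral_Ioc_le {f g : ℝ → X} {A : ℝ≥0∞} (hp : 0 < p) (hl : 0 < l)
    (h : ∀ x, ∫⁻ t in Ioc x (x + l), ‖f t - g t‖ₑ ^ p ≤ ENNReal.ofReal l * A ^ p) :
    DS p l univ f g ≤ A := by
  refine iSup₂_le fun x _ => ?_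
  rw [ofReal_rpow_one_div_mean_le_iff hp hl
    (intervalIntegral.integral_nonneg (by linarith) fun t _ => by positivity)]
  exact (ofReal_intervalIntegral_norm_rpow_le _ hp.le (by linarith)).trans (h x)

lemma SpNorm_eq_DS_zero (p : ℝ) (I : Set ℝ) (f : ℝ → X) : SpNorm p I f = DS p 1 I f 0 := by
  simp [SpNorm, DS]

lemma LocLpOn.intervalIntegrable_norm_rpow {g : ℝ → X} (hg : LocLpOn p univ g) (a b : ℝ) :
    IntervalIntegrable (fun t => ‖g t‖ ^ p) volume a b :=
  ((locallyIntegrableOn_univ.mp hg.2).integrableOn_isCompact isCompact_uIcc).intervalIntegrable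

lemma intervalIntegrable_norm_sub_rpow {a b : ℝ} {f g : ℝ → X} (hp : 0 < p)
    (hfm : AEStronglyMeasurable f) (hgm : AEStronglyMeasurable g)
    (hf : IntervalIntegrable (fun t => ‖f t‖ ^ p) volume a b)
    (hg : IntervalIntegrable (fun t => ‖g t‖ ^ p) volume a b) :
    IntervalIntegrable (fun t => ‖f t - g t‖ ^ p) volume a b := by
  have hLp {h : ℝ → X} (hm : AEStronglyMeasurable h) :
      IntegrableOn (fun t => ‖h t‖ ^ p) (uIoc a b) ↔
        MemLp h (ENNReal.ofReal p) (volume.restrict (uIoc a b)) := by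
    have := integrable_norm_rpow_iff (hm.restrict (s := uIoc a b)) (by simpa using hp)
      ENNReal.ofReal_ne_top
    rwa [ENNReal.toReal_ofReal hp.le] at this
  rw [intervalIntegrable_iff] at hf hg ⊢
  exact (hLp (hfm.sub hgm)).mpr (((hLp hfm).mp hf).sub ((hLp hgm).mp hg))

lemma LocLpOn.setLIntegral_Ioc_comp_add_sub_le_DS {g : ℝ → X} (hp : 0 < p) (hl : 0 < l)
    (hg : LocLpOn p univ g) (τ y : ℝ) :
    ∫⁻ s in Ioc y (y + l), ‖g (s + τ) - g s‖ₑ ^ p ≤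
      ENNReal.ofReal l * DS p l univ (fun t => g (t + τ)) g ^ p := by
  have hgm : AEStronglyMeasurable g := by simpa using hg.1
  refine setLIntegral_Ioc_le_DS hp hl (intervalIntegrable_norm_sub_rpow hp
    (hgm.comp_quasiMeasurePreserving (quasiMeasurePreserving_add_right volume τ)) hgm ?_
    (hg.intervalIntegrable_norm_rpow _ _))
  simpa using (hg.intervalIntegrable_norm_rpow (y + τ) (y + l + τ)).comp_add_right τ

end Stepanov

lemma lintegral_enorm_le_eLpNorm_mul_eLpNorm {α E : Type*} [MeasurableSpace α]
    [NormedAddCommGroup E] {μ : Measure α} {p q : ℝ} (hpq : p.HolderConjugate q) {F : α → E}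
    {ψ φ : α → ℝ} (hF : ∀ᵐ a ∂μ, ‖F a‖ ≤ ψ a * φ a) (hψ : AEStronglyMeasurable ψ μ)
    (hφ : AEStronglyMeasurable φ μ) :
    ∫⁻ a, ‖F a‖ₑ ∂μ ≤ eLpNorm ψ (ENNReal.ofReal q) μ * eLpNorm φ (ENNReal.ofReal p) μ := by
  have := hpq.symm.ennrealOfReal
  calc ∫⁻ a, ‖F a‖ₑ ∂μ ≤ ∫⁻ a, ‖(ψ • φ) a‖ₑ ∂μ :=
        lintegral_mono_ae <| hF.mono fun a ha =>
          enorm_le_iff_norm_le.mpr (ha.trans (le_abs_self _))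
    _ = eLpNorm (ψ • φ) 1 μ := eLpNorm_one_eq_lintegral_enorm.symm
    _ ≤ _ := eLpNorm_smul_le_mul_eLpNorm hφ hψ

section OperatorKernel

variable {𝕜 X Y : Type*} [NontriviallyNormedField 𝕜] [NormedAddCommGroup X] [NormedSpace 𝕜 X]
  [NormedAddCommGroup Y] [NormedSpace 𝕜 Y]

lemma aestronglyMeasurable_clm_apply_of_continuousOn {α : Type*} [TopologicalSpace α]
    [SecondCountableTopology α] [MeasurableSpace α] [OpensMeasurableSpace α] {μ : Measure α}
    {s : Set α} (hs : MeasurableSet s) {A : α → X →L[𝕜] Y}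
    (hA : ∀ x, ContinuousOn (fun a => A a x) s) {f : α → X}
    (hf : AEStronglyMeasurable f (μ.restrict s)) :
    AEStronglyMeasurable (fun a => A a (f a)) (μ.restrict s) := by
  have hsimple (φ : SimpleFunc α X) :
      AEStronglyMeasurable (fun a => A a (φ a)) (μ.restrict s) := by
    induction φ using SimpleFunc.induction with
    | @const c t ht =>
      refine (((hA c).aestronglyMeasurable hs).indicator ht).congr
        (Eventually.of_forall fun a => ?_)
      by_cases ha : a ∈ t <;> simp [ha]
    | add _ hφ hψ =>
      exact (hφ.add hψ).congr (Eventually.of_forall fun a => by simp)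
  obtain ⟨f', hf'm, hff'⟩ := hf
  refine (aestronglyMeasurable_of_tendsto_ae atTop (fun n => hsimple (hf'm.approx n))
    (Eventually.of_forall fun a =>
      ((A a).continuous.tendsto _).comp (hf'm.tendsto_approx a))).congr ?_
  filter_upwards [hff'] with a ha
  rw [ha]

variable {R : ℝ → X →L[𝕜] Y} {ψ w : ℝ → ℝ} {p q : ℝ}

lemma setLIntegral_Ioi_enorm_apply_comp_sub_le (hpq : p.HolderConjugate q)
    (hR : ∀ r, 0 < r → ‖R r‖ ≤ ψ r * w r)
    (hψ : AEStronglyMeasurable ψ (volume.restrict (Ioi 0))) (hw : Measurable w) {f : ℝ → X}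
    (hf : AEStronglyMeasurable f) (t : ℝ) :
    ∫⁻ r in Ioi 0, ‖R r (f (t - r))‖ₑ ≤ eLpNorm ψ (ENNReal.ofReal q) (volume.restrict (Ioi 0)) *
      (∫⁻ r in Ioi 0, ‖w r‖ₑ ^ p * ‖f (t - r)‖ₑ ^ p) ^ (1 / p) := by
  have hft : AEStronglyMeasurable (fun r => f (t - r)) :=
    hf.comp_quasiMeasurePreserving (quasiMeasurePreserving_sub_left volume t)
  refine (lintegral_enorm_le_eLpNorm_mul_eLpNorm hpq (φ := fun r => w r * ‖f (t - r)‖) ?_ hψ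
    (hw.aestronglyMeasurable.mul hft.norm).restrict).trans_eq ?_
  · filter_upwards [self_mem_ae_restrict measurableSet_Ioi] with r (hr : 0 < r)
    calc ‖R r (f (t - r))‖ ≤ ‖R r‖ * ‖f (t - r)‖ := (R r).le_opNorm _
      _ ≤ ψ r * w r * ‖f (t - r)‖ := by gcongr; exact hR r hr
      _ = ψ r * (w r * ‖f (t - r)‖) := mul_assoc _ _ _
  · rw [eLpNorm_eq_lintegral_rpow_enorm_toReal (f := fun r => w r * ‖f (t - r)‖)
      (by simpa using hpq.pos) ENNReal.ofReal_ne_top,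
      ENNReal.toReal_ofReal hpq.nonneg]
    simp_rw [enorm_mul, enorm_norm, ENNReal.mul_rpow_of_nonneg _ _ hpq.nonneg]

lemma integrableOn_Ioi_apply_comp_sub (hpq : p.HolderConjugate q)
    (hRc : ∀ x, ContinuousOn (fun r => R r x) (Ioi 0)) (hR : ∀ r, 0 < r → ‖R r‖ ≤ ψ r * w r)
    (hψ : MemLp ψ (ENNReal.ofReal q) (volume.restrict (Ioi 0))) (hw : Measurable w) {f : ℝ → X}
    (hf : AEStronglyMeasurable f) {t : ℝ}
    (hfin : ∫⁻ r in Ioi 0, ‖w r‖ₑ ^ p * ‖f (t - r)‖ₑ ^ p ≠ ⊤) :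
    IntegrableOn (fun r => R r (f (t - r))) (Ioi 0) :=
  ⟨aestronglyMeasurable_clm_apply_of_continuousOn measurableSet_Ioi hRc
      (hf.comp_quasiMeasurePreserving (quasiMeasurePreserving_sub_left volume t)).restrict,
    (setLIntegral_Ioi_enorm_apply_comp_sub_le hpq hR hψ.1 hw hf t).trans_lt
      (ENNReal.mul_lt_top hψ.eLpNorm_lt_top
        (ENNReal.rpow_lt_top_of_nonneg (by simpa using hpq.pos.le) hfin))⟩

lemma setLIntegral_Ioi_rpow_mul_comp_sub_ne_top (hp : 0 < p) (hw0 : ∀ r, 0 ≤ r → 0 ≤ w r)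
    (hw : AntitoneOn w (Ici 0)) (hw_sum : Summable fun n : ℕ => w n ^ p) {g : ℝ → X}
    (hg : LocLpOn p univ g) (hgS : SpNorm p univ g < ⊤) (t : ℝ) :
    ∫⁻ r in Ioi 0, ‖w r‖ₑ ^ p * ‖g (t - r)‖ₑ ^ p ≠ ⊤ := by
  have hwp (r : ℝ) (hr : 0 ≤ r) : ‖w r‖ₑ ^ p = ENNReal.ofReal (w r ^ p) := by
    rw [← ofReal_norm, ENNReal.ofReal_rpow_of_nonneg (norm_nonneg _) hp.le,
      Real.norm_of_nonneg (hw0 r hr)]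
  have hv : AntitoneOn (fun r => ‖w r‖ₑ ^ p) (Ici 0) := fun a ha b hb hab => by
    simp only [hwp a ha, hwp b hb]
    gcongr
    exacts [hw0 b hb, hw ha hb hab]
  have hgm : AEStronglyMeasurable g := by simpa using hg.1
  have hC (y : ℝ) : ∫⁻ s in Ioc y (y + 1), ‖g s‖ₑ ^ p ≤ SpNorm p univ g ^ p := by
    simpa [SpNorm_eq_DS_zero] using setLIntegral_Ioc_le_DS (f := g) (g := 0) hp one_pos
      (by simpa using hg.intervalIntegrable_norm_rpow y (y + 1))
  have hsum : ∑' n : ℕ, ‖w n‖ₑ ^ p = ENNReal.ofReal (∑' n : ℕ, w n ^ p) := by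
    rw [ENNReal.ofReal_tsum_of_nonneg (fun n => by have := hw0 n n.cast_nonneg; positivity) hw_sum]
    exact tsum_congr fun n => hwp n n.cast_nonneg
  refine ((setLIntegral_Ioi_mul_comp_sub_le_tsum hv (hgm.enorm.pow_const p) hC t).trans_lt ?_).ne
  rw [hsum]
  exact ENNReal.mul_lt_top ENNReal.ofReal_lt_top (ENNReal.rpow_lt_top_of_nonneg hp.le hgS.ne)

end OperatorKernel

section Convolution

variable {𝕜 X Y : Type*} [NontriviallyNormedField 𝕜] [NormedAddCommGroup X] [NormedSpace 𝕜 X]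
  [NormedAddCommGroup Y] [NormedSpace 𝕜 Y] [NormedSpace ℝ Y]
  {R : ℝ → X →L[𝕜] Y} {ψ w : ℝ → ℝ} {p q : ℝ}

lemma enorm_setIntegral_Ioi_comp_add_sub_rpow_le (hpq : p.HolderConjugate q)
    (hR : ∀ r, 0 < r → ‖R r‖ ≤ ψ r * w r)
    (hψ : AEStronglyMeasurable ψ (volume.restrict (Ioi 0))) (hw : Measurable w) {g : ℝ → X}
    (hg : AEStronglyMeasurable g) (hconv : ∀ t, IntegrableOn (fun r => R r (g (t - r))) (Ioi 0))
    (τ t : ℝ) :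
    ‖(∫ r in Ioi 0, R r (g (t + τ - r))) - ∫ r in Ioi 0, R r (g (t - r))‖ₑ ^ p ≤
      eLpNorm ψ (ENNReal.ofReal q) (volume.restrict (Ioi 0)) ^ p *
        ∫⁻ r in Ioi 0, ‖w r‖ₑ ^ p * ‖g (t - r + τ) - g (t - r)‖ₑ ^ p := by
  have hp := hpq.pos
  rw [← integral_sub (hconv (t + τ)) (hconv t)]
  calc _ ≤ (∫⁻ r in Ioi 0, ‖R r (g (t - r + τ) - g (t - r))‖ₑ) ^ p := by
        gcongr
        refine (enorm_integral_le_lintegral_enorm _).trans_eq ?_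
        simp_rw [add_sub_right_comm t τ, ← map_sub]
    _ ≤ (eLpNorm ψ (ENNReal.ofReal q) (volume.restrict (Ioi 0)) *
          (∫⁻ r in Ioi 0, ‖w r‖ₑ ^ p * ‖g (t - r + τ) - g (t - r)‖ₑ ^ p) ^ (1 / p)) ^ p := by
        gcongr
        exact setLIntegral_Ioi_enorm_apply_comp_sub_le hpq hR hψ hw (f := fun s => g (s + τ) - g s)
          ((hg.comp_quasiMeasurePreserving (quasiMeasurePreserving_add_right volume τ)).sub hg) t
    _ = _ := by
        rw [ENNReal.mul_rpow_of_nonneg _ _ hp.le, ← ENNReal.rpow_mul, one_div_mul_cancel hp.ne',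
          ENNReal.rpow_one]

theorem DS_convolution_comp_add_le (hpq : p.HolderConjugate q)
    (hRc : ∀ x, ContinuousOn (fun r => R r x) (Ioi 0)) (hR : ∀ r, 0 < r → ‖R r‖ ≤ ψ r * w r)
    (hψ : MemLp ψ (ENNReal.ofReal q) (volume.restrict (Ioi 0))) (hw : Measurable w)
    (hw0 : ∀ r, 0 ≤ r → 0 ≤ w r) (hw_anti : AntitoneOn w (Ici 0))
    (hw_sum : Summable fun n : ℕ => w n ^ p) {g : ℝ → X} (hg : LocLpOn p univ g)
    (hgS : SpNorm p univ g < ⊤) {G : ℝ → Y} (hG : ∀ t, G t = ∫ s in Iic t, R (t - s) (g s))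
    (τ : ℝ) {l : ℝ} (hl : 0 < l) :
    DS p l univ (fun t => G (t + τ)) G ≤
      eLpNorm ψ (ENNReal.ofReal q) (volume.restrict (Ioi 0)) *
        eLpNorm w (ENNReal.ofReal p) (volume.restrict (Ioi 0)) *
          DS p l univ (fun t => g (t + τ)) g := by
  have hp := hpq.pos
  have hgm : AEStronglyMeasurable g := by simpa using hg.1
  have hG' (t : ℝ) : G t = ∫ r in Ioi 0, R r (g (t - r)) := by
    rw [hG, ← setIntegral_Iic_comp_sub_left (fun r => R r (g (t - r))) t]
    simp only [sub_sub_cancel]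
  have hconv (t : ℝ) : IntegrableOn (fun r => R r (g (t - r))) (Ioi 0) :=
    integrableOn_Ioi_apply_comp_sub hpq hRc hR hψ hw hgm
      (setLIntegral_Ioi_rpow_mul_comp_sub_ne_top hp hw0 hw_anti hw_sum hg hgS t)
  have hwp : ∫⁻ r in Ioi 0, ‖w r‖ₑ ^ p =
      eLpNorm w (ENNReal.ofReal p) (volume.restrict (Ioi 0)) ^ p := by
    rw [eLpNorm_eq_lintegral_rpow_enorm_toReal (by simpa using hp) ENNReal.ofReal_ne_top,
      ENNReal.toReal_ofReal hp.le, one_div, ENNReal.rpow_inv_rpow hp.ne']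
  set Kψ := eLpNorm ψ (ENNReal.ofReal q) (volume.restrict (Ioi 0))
  refine DS_le_of_setLIntegral_Ioc_le hp hl fun x => ?_
  calc ∫⁻ t in Ioc x (x + l), ‖G (t + τ) - G t‖ₑ ^ p
      ≤ ∫⁻ t in Ioc x (x + l),
          Kψ ^ p * ∫⁻ r in Ioi 0, ‖w r‖ₑ ^ p * ‖g (t - r + τ) - g (t - r)‖ₑ ^ p := by
        refine lintegral_mono fun t => ?_
        rw [hG', hG']
        exact enorm_setIntegral_Ioi_comp_add_sub_rpow_le hpq hR hψ.1 hw hgm hconv τ t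
    _ = Kψ ^ p * ∫⁻ t in Ioc x (x + l),
          ∫⁻ r in Ioi 0, ‖w r‖ₑ ^ p * ‖g (t - r + τ) - g (t - r)‖ₑ ^ p :=
        lintegral_const_mul' _ _ (ENNReal.rpow_ne_top_of_nonneg hp.le hψ.eLpNorm_lt_top.ne)
    _ ≤ Kψ ^ p * ((∫⁻ r in Ioi 0, ‖w r‖ₑ ^ p) *
          (ENNReal.ofReal l * DS p l univ (fun t => g (t + τ)) g ^ p)) := by
        gcongr
        exact setLIntegral_Ioc_setLIntegral_mul_comp_sub_le (v := fun r => ‖w r‖ₑ ^ p)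
          (u := fun s => ‖g (s + τ) - g s‖ₑ ^ p) (hw.enorm.pow_const p).aemeasurable
          (((hgm.comp_quasiMeasurePreserving (quasiMeasurePreserving_add_right volume τ)).sub
            hgm).enorm.pow_const p)
          (hg.setLIntegral_Ioc_comp_add_sub_le_DS hp hl τ) x
    _ = ENNReal.ofReal l * (Kψ * eLpNorm w (ENNReal.ofReal p) (volume.restrict (Ioi 0)) *
          DS p l univ (fun t => g (t + τ)) g) ^ p := by
        rw [hwp, ENNReal.mul_rpow_of_nonneg _ _ hp.le, ENNReal.mul_rpow_of_nonneg _ _ hp.le]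
        ring

end Convolution

section RealIntegrals

variable {α : Type*} [MeasurableSpace α] {μ : Measure α} {f : α → ℝ} {p : ℝ}

lemma memLp_ofReal_of_integrable_rpow (hp : 0 < p) (hfm : AEStronglyMeasurable f μ)
    (hf0 : 0 ≤ᵐ[μ] f) (hf : Integrable (fun x => f x ^ p) μ) : MemLp f (ENNReal.ofReal p) μ := by
  have := integrable_norm_rpow_iff hfm (by simpa using hp) ENNReal.ofReal_ne_top
  rw [ENNReal.toReal_ofReal hp.le] at this
  exact this.mp (hf.congr (hf0.mono fun x hx => by simp [Real.norm_of_nonneg hx]))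

lemma eLpNorm_ofReal_eq_ofReal_integral_rpow (hp : 0 < p) (hfm : AEStronglyMeasurable f μ)
    (hf0 : 0 ≤ᵐ[μ] f) (hf : Integrable (fun x => f x ^ p) μ) :
    eLpNorm f (ENNReal.ofReal p) μ = ENNReal.ofReal ((∫ x, f x ^ p ∂μ) ^ (1 / p)) := by
  rw [(memLp_ofReal_of_integrable_rpow hp hfm hf0 hf).eLpNorm_eq_integral_rpow_norm
    (by simpa using hp) ENNReal.ofReal_ne_top, ENNReal.toReal_ofReal hp.le, one_div]
  congr 2
  exact integral_congr_ae (hf0.mono fun x hx => by simp [Real.norm_of_nonneg hx])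

end RealIntegrals

lemma integrableOn_Ioi_of_le_rpow {f : ℝ → ℝ}
    (hf : AEStronglyMeasurable f (volume.restrict (Ioi 0))) {a b C : ℝ} (ha : -1 < a)
    (hb : b < -1) (h0 : ∀ s ∈ Ioc (0 : ℝ) 1, ‖f s‖ ≤ C * s ^ a)
    (h1 : ∀ s ∈ Ioi (1 : ℝ), ‖f s‖ ≤ C * s ^ b) : IntegrableOn f (Ioi 0) := by
  rw [← Ioc_union_Ioi_eq_Ioi zero_le_one]
  exact IntegrableOn.union
    (Integrable.mono' ((intervalIntegral.intervalIntegrable_rpow' ha).1.const_mul C)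
      (hf.mono_set Ioc_subset_Ioi_self) (ae_restrict_of_forall_mem measurableSet_Ioc h0))
    (Integrable.mono' ((integrableOn_Ioi_rpow_of_lt hb one_pos).const_mul C)
      (hf.mono_set (Ioi_subset_Ioi zero_le_one)) (ae_restrict_of_forall_mem measurableSet_Ioi h1))

section Weights

variable {β γ ζ p : ℝ} {s : ℝ}

lemma one_div_one_add_rpow_rpow_le_rpow (hs : 0 < s) (hp : 0 ≤ p) :
    (1 / (1 + s ^ ζ)) ^ p ≤ s ^ (-(ζ * p)) := by
  have hsζ := Real.rpow_pos_of_pos hs ζ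
  calc (1 / (1 + s ^ ζ)) ^ p ≤ (s ^ (-ζ)) ^ p := by
        gcongr
        rw [Real.rpow_neg hs.le, ← one_div]
        gcongr
        linarith
    _ = s ^ (-(ζ * p)) := by rw [← Real.rpow_mul hs.le, neg_mul]

lemma one_div_one_add_rpow_rpow_le_one (hs : 0 ≤ s) (hp : 0 ≤ p) :
    (1 / (1 + s ^ ζ)) ^ p ≤ 1 :=
  Real.rpow_le_one (by positivity) (div_le_one_of_le₀ (by linarith [Real.rpow_nonneg hs ζ])
    (by positivity)) hp

lemma antitoneOn_one_div_one_add_rpow (hζ : 0 ≤ ζ) :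
    AntitoneOn (fun s : ℝ => 1 / (1 + s ^ ζ)) (Ici 0) := fun a (ha : 0 ≤ a) b _ hab => by
  dsimp only
  gcongr

lemma summable_one_div_one_add_rpow_rpow (hp : 0 ≤ p) (hζp : 1 < ζ * p) :
    Summable fun n : ℕ => (1 / (1 + (n : ℝ) ^ ζ)) ^ p := by
  refine (summable_nat_add_iff 1).mp <| Summable.of_nonneg_of_le (fun n => by positivity)
    (fun n => one_div_one_add_rpow_rpow_le_rpow (by positivity) hp)
    ((summable_nat_add_iff 1).mpr (Real.summable_nat_rpow.mpr (by linarith)))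

lemma integrableOn_Ioi_one_div_one_add_rpow_rpow (hp : 0 ≤ p) (hζp : 1 < ζ * p) :
    IntegrableOn (fun s : ℝ => (1 / (1 + s ^ ζ)) ^ p) (Ioi 0) := by
  refine integrableOn_Ioi_of_le_rpow (Measurable.aestronglyMeasurable (by fun_prop))
    (a := 0) (b := -(ζ * p)) (C := 1) neg_one_lt_zero (by linarith)
    (fun s hs => ?_) (fun s (hs : 1 < s) => ?_)
  · have := hs.1
    rw [Real.norm_of_nonneg (by positivity), one_mul, Real.rpow_zero]
    exact one_div_one_add_rpow_rpow_le_one this.le hp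
  · have : 0 < s := by linarith
    rw [Real.norm_of_nonneg (by positivity), one_mul]
    exact one_div_one_add_rpow_rpow_le_rpow this hp

lemma eLpNorm_one_div_one_add_rpow (hp : 0 < p) (hζp : 1 < ζ * p) :
    eLpNorm (fun s : ℝ => 1 / (1 + s ^ ζ)) (ENNReal.ofReal p) (volume.restrict (Ioi 0)) =
      ENNReal.ofReal ((∫ s in Ioi 0, (1 / (1 + s ^ ζ)) ^ p) ^ (1 / p)) :=
  eLpNorm_ofReal_eq_ofReal_integral_rpow hp (Measurable.aestronglyMeasurable (by fun_prop))
    (ae_restrict_of_forall_mem measurableSet_Ioi fun s (hs : 0 < s) => by positivity)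
    (integrableOn_Ioi_one_div_one_add_rpow_rpow hp.le hζp)

end Weights

section Kernel

variable {β γ ζ q s : ℝ}

lemma rpow_mul_one_add_rpow_div_le_of_le_one (hs : 0 < s) (hs1 : s ≤ 1) (hζ : 0 ≤ ζ) :
    s ^ (β - 1) * (1 + s ^ ζ) / (1 + s ^ γ) ≤ 2 * s ^ (β - 1) := by
  have hsζ : s ^ ζ ≤ 1 := Real.rpow_le_one hs.le hs1 hζ
  calc s ^ (β - 1) * (1 + s ^ ζ) / (1 + s ^ γ) ≤ s ^ (β - 1) * (1 + s ^ ζ) :=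
        div_le_self (by positivity) (by linarith [Real.rpow_nonneg hs.le γ])
    _ ≤ 2 * s ^ (β - 1) := by nlinarith [Real.rpow_nonneg hs.le (β - 1)]

lemma rpow_mul_one_add_rpow_div_le_of_one_le (hs : 1 ≤ s) (hζ : 0 ≤ ζ) :
    s ^ (β - 1) * (1 + s ^ ζ) / (1 + s ^ γ) ≤ 2 * s ^ (β - 1 + ζ - γ) := by
  have hs0 : 0 < s := one_pos.trans_le hs
  have hsζ : 1 ≤ s ^ ζ := Real.one_le_rpow hs hζ
  calc s ^ (β - 1) * (1 + s ^ ζ) / (1 + s ^ γ) ≤ s ^ (β - 1) * (2 * s ^ ζ) / s ^ γ := by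
        gcongr
        · linarith
        · linarith
    _ = 2 * s ^ (β - 1 + ζ - γ) := by
        rw [Real.rpow_sub hs0 (β - 1 + ζ), Real.rpow_add hs0]
        ring

lemma integrableOn_Ioi_rpow_mul_one_add_rpow_div_rpow (hq : 0 ≤ q) (hζ : 0 ≤ ζ)
    (h0 : -1 < (β - 1) * q) (h1 : (β - 1 + ζ - γ) * q < -1) :
    IntegrableOn (fun s : ℝ => (s ^ (β - 1) * (1 + s ^ ζ) / (1 + s ^ γ)) ^ q) (Ioi 0) := by
  refine integrableOn_Ioi_of_le_rpow (Measurable.aestronglyMeasurable (by fun_prop))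
    (C := 2 ^ q) h0 h1 (fun s hs => ?_) (fun s (hs : 1 < s) => ?_)
  · have hs0 := hs.1
    rw [Real.norm_of_nonneg (by positivity), Real.rpow_mul hs0.le, ← Real.mul_rpow (by norm_num)
      (by positivity)]
    gcongr
    exact rpow_mul_one_add_rpow_div_le_of_le_one hs0 hs.2 hζ
  · have hs0 : 0 < s := one_pos.trans hs
    rw [Real.norm_of_nonneg (by positivity), Real.rpow_mul hs0.le, ← Real.mul_rpow (by norm_num)
      (by positivity)]
    gcongr
    exact rpow_mul_one_add_rpow_div_le_of_one_le hs.le hζ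

lemma memLp_rpow_mul_one_add_rpow_div (hq : 0 < q) (hζ : 0 ≤ ζ) (h0 : -1 < (β - 1) * q)
    (h1 : (β - 1 + ζ - γ) * q < -1) :
    MemLp (fun s : ℝ => s ^ (β - 1) * (1 + s ^ ζ) / (1 + s ^ γ)) (ENNReal.ofReal q)
      (volume.restrict (Ioi 0)) :=
  memLp_ofReal_of_integrable_rpow hq (Measurable.aestronglyMeasurable (by fun_prop))
    (ae_restrict_of_forall_mem measurableSet_Ioi fun s (hs : 0 < s) => by positivity)
    (integrableOn_Ioi_rpow_mul_one_add_rpow_div_rpow hq.le hζ h0 h1)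

lemma eLpNorm_rpow_mul_one_add_rpow_div (hq : 0 < q) (hζ : 0 ≤ ζ) (h0 : -1 < (β - 1) * q)
    (h1 : (β - 1 + ζ - γ) * q < -1) :
    eLpNorm (fun s : ℝ => s ^ (β - 1) * (1 + s ^ ζ) / (1 + s ^ γ)) (ENNReal.ofReal q)
      (volume.restrict (Ioi 0)) =
      ENNReal.ofReal ((∫ s in Ioi 0, (s ^ (β - 1) * (1 + s ^ ζ) / (1 + s ^ γ)) ^ q) ^ (1 / q)) :=
  eLpNorm_ofReal_eq_ofReal_integral_rpow hq (Measurable.aestronglyMeasurable (by fun_prop))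
    (ae_restrict_of_forall_mem measurableSet_Ioi fun s (hs : 0 < s) => by positivity)
    (integrableOn_Ioi_rpow_mul_one_add_rpow_div_rpow hq.le hζ h0 h1)

end Kernel

theorem convolution_translation_estimate_general {X Y : Type*}
    [NormedAddCommGroup X] [NormedSpace ℂ X]
    [NormedAddCommGroup Y] [NormedSpace ℂ Y]
    (p q M β γ ζ : ℝ) (hp : 1 < p) (hpq : 1 / p + 1 / q = 1)
    (hM : 0 < M)
    (hqβ : q * (β - 1) > -1) (hζ1 : 1 / p < ζ) (hζ2 : ζ < 1 / p + γ - β)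
    (R : ℝ → X →L[ℂ] Y)
    (hRsc : ∀ x : X, ContinuousOn (fun t => R t x) (Set.Ioi (0 : ℝ)))
    (hR : ∀ t : ℝ, 0 < t → ‖R t‖ ≤ M * t ^ (β - 1) / (1 + t ^ γ))
    (g : ℝ → X) (hgloc : LocLpOn p Set.univ g) (hgS : SpNorm p Set.univ g < ⊤)
    (G : ℝ → Y) (hG : ∀ t : ℝ, G t = ∫ s in Set.Iic t, R (t - s) (g s)) :
    ∀ τ l : ℝ, 0 < l →
      DS p l Set.univ (fun t => G (t + τ)) G ≤
        ENNReal.ofReal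
            (M * (∫ s in Set.Ioi (0 : ℝ), (s ^ (β - 1) * (1 + s ^ ζ) / (1 + s ^ γ)) ^ q) ^ (1 / q) *
              (∫ s in Set.Ioi (0 : ℝ), (1 / (1 + s ^ ζ)) ^ p) ^ (1 / p)) *
          DS p l Set.univ (fun t => g (t + τ)) g := by
  intro τ l hl
  have hpq' : p.HolderConjugate q :=
    Real.holderConjugate_iff.mpr ⟨hp, by simpa only [one_div] using hpq⟩
  have hq := hpq'.symm.pos
  have hζ : 0 < ζ := (one_div_pos.mpr hpq'.pos).trans hζ1
  have hζp : 1 < ζ * p := (div_lt_iff₀ hpq'.pos).mp hζ1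
  have hβq : -1 < (β - 1) * q := by linarith
  have hkq : (β - 1 + ζ - γ) * q < -1 := (lt_div_iff₀ hq).mp (by rw [neg_div]; linarith)
  have hk_int_nonneg : 0 ≤ ∫ s in Ioi (0 : ℝ), (s ^ (β - 1) * (1 + s ^ ζ) / (1 + s ^ γ)) ^ q :=
    setIntegral_nonneg measurableSet_Ioi fun s (hs : 0 < s) => by positivity
  calc DS p l univ (fun t => G (t + τ)) G
      ≤ eLpNorm (M • fun s : ℝ => s ^ (β - 1) * (1 + s ^ ζ) / (1 + s ^ γ)) (ENNReal.ofReal q)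
          (volume.restrict (Ioi 0)) *
        eLpNorm (fun s : ℝ => 1 / (1 + s ^ ζ)) (ENNReal.ofReal p) (volume.restrict (Ioi 0)) *
          DS p l univ (fun t => g (t + τ)) g :=
        DS_convolution_comp_add_le hpq' hRsc
          (fun r hr => (hR r hr).trans_eq (by simp only [Pi.smul_apply, smul_eq_mul]; field_simp))
          ((memLp_rpow_mul_one_add_rpow_div hq hζ.le hβq hkq).const_smul M) (by fun_prop)
          (fun r hr => by positivity) (antitoneOn_one_div_one_add_rpow hζ.le)
          (summable_one_div_one_add_rpow_rpow hpq'.nonneg hζp) hgloc hgS hG τ hl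
    _ = _ := by
        rw [eLpNorm_const_smul, eLpNorm_rpow_mul_one_add_rpow_div hq hζ.le hβq hkq,
          eLpNorm_one_div_one_add_rpow hpq'.pos hζp, Real.enorm_of_nonneg hM.le,
          ← ENNReal.ofReal_mul hM.le,
          ← ENNReal.ofReal_mul (mul_nonneg hM.le (Real.rpow_nonneg hk_int_nonneg _))]

/-- The key estimate in the proof of Theorem 2.1: the Stepanov distance of the
translates of `G` is controlled by that of the translates of `g`. -/
theorem convolution_translation_estimate {X Y : Type*}
    [NormedAddCommGroup X] [NormedSpace ℂ X] [CompleteSpace X]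
    [NormedAddCommGroup Y] [NormedSpace ℂ Y] [CompleteSpace Y]
    (p q M β γ ζ : ℝ) (hp : 1 < p) (hpq : 1 / p + 1 / q = 1)
    (hM : 0 < M) (hβ : β ∈ Set.Ioc (0 : ℝ) 1) (hγ : 1 < γ)
    (hqβ : q * (β - 1) > -1) (hζ1 : 1 / p < ζ) (hζ2 : ζ < 1 / p + γ - β)
    (R : ℝ → X →L[ℂ] Y)
    (hRsc : ∀ x : X, ContinuousOn (fun t => R t x) (Set.Ioi (0 : ℝ)))
    (hR : ∀ t : ℝ, 0 < t → ‖R t‖ ≤ M * t ^ (β - 1) / (1 + t ^ γ))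
    (g : ℝ → X) (hgloc : LocLpOn p Set.univ g) (hgS : SpNorm p Set.univ g < ⊤)
    (G : ℝ → Y) (hG : ∀ t : ℝ, G t = ∫ s in Set.Iic t, R (t - s) (g s)) :
    ∀ τ l : ℝ, 0 < l →
      DS p l Set.univ (fun t => G (t + τ)) G ≤
        ENNReal.ofReal
            (M * (∫ s in Set.Ioi (0 : ℝ), (s ^ (β - 1) * (1 + s ^ ζ) / (1 + s ^ γ)) ^ q) ^ (1 / q) *
              (∫ s in Set.Ioi (0 : ℝ), (1 / (1 + s ^ ζ)) ^ p) ^ (1 / p)) *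
          DS p l Set.univ (fun t => g (t + τ)) g :=
  convolution_translation_estimate_general p q M β γ ζ hp hpq hM hqβ hζ1 hζ2 R hRsc hR g hgloc hgS G
    hG
end
end

section
/- Let 1 ≤ p < ∞ and define q : [0,∞) → ℝ by q(t) := Σ_{n=0}^∞ χ_{[n², n²+1]}(t), where χ_A denotes the characteristic function of the set A. Then: (i) ∫_0^t |q(s)|^p ds ≤ 2 + √t for every t ≥ 0; (ii) q is equi-Weyl-p-vanishing; and (iii) q is not Stepanov p-vanishing. -/
open MeasureTheory Filter Set
open scoped ENNReal NNReal Topology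

noncomputable section

/-!
Away from the block endpoints, `q` is the indicator of the disjoint union of the blocks
`(n², n² + 1)`, so `∫ₐᵇ |q|ᵖ` is the measure of that union inside `(a, b]`. Only the blocks with
`a - 1 < n² ≤ b` contribute, at most `√b - √(a - 1) + 1` of them. Hence a window of length
`l ≥ 1` carries mass at most `3√l` wherever it sits, and the Weyl means are `O(l^(-1/(2p)))`
uniformly in the position; but each unit window `[n², n² + 1]` carries mass `1`, so the Stepanov
means do not tend to `0`.
-/

open Function in
theorem tsum_indicator_eq_indicator_iUnion {ι α M : Type*} [AddCommMonoid M]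
    [TopologicalSpace M] {s : ι → Set α} (hs : Pairwise (Disjoint on s)) (f : α → M) (x : α) :
    ∑' i, (s i).indicator f x = (⋃ i, s i).indicator f x := by
  by_cases hx : x ∈ ⋃ i, s i
  · obtain ⟨i, hi⟩ := mem_iUnion.1 hx
    rw [indicator_of_mem hx, tsum_eq_single i fun j hj =>
      indicator_of_notMem (disjoint_left.1 (hs hj.symm) hi) f, indicator_of_mem hi]
  · rw [indicator_of_notMem hx]
    exact (tsum_congr fun i =>
      indicator_of_notMem (fun hi => hx (mem_iUnion_of_mem i hi)) f).trans tsum_zero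

theorem intervalIntegral_norm_rpow_eq_volume_real {q : ℝ → ℝ} {s : Set ℝ} {p a b : ℝ}
    (hs : MeasurableSet s) (hq : q =ᵐ[volume] s.indicator 1) (hp : p ≠ 0) (hab : a ≤ b) :
    ∫ t in a..b, ‖q t‖ ^ p = volume.real (s ∩ Ioc a b) := by
  have hq_rpow : (fun t => ‖q t‖ ^ p) =ᵐ[volume] s.indicator 1 := by
    filter_upwards [hq] with t ht
    by_cases hts : t ∈ s <;> simp [ht, hts, hp]
  rw [intervalIntegral.integral_of_le hab, integral_congr_ae (ae_restrict_of_ae hq_rpow),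
    integral_indicator_one hs, measureReal_restrict_apply hs, inter_comm]

theorem card_Icc_ceil_floor_le {c d : ℝ} (hc : 0 ≤ c) (hcd : c ≤ d) :
    ((Finset.Icc ⌈c⌉₊ ⌊d⌋₊).card : ℝ) ≤ d - c + 1 := by
  rw [Nat.card_Icc]
  rcases le_or_gt ⌈c⌉₊ (⌊d⌋₊ + 1) with h | h
  · have hd : (⌊d⌋₊ : ℝ) ≤ d := Nat.floor_le (hc.trans hcd)
    have hc' : c ≤ (⌈c⌉₊ : ℝ) := Nat.le_ceil c
    push_cast [Nat.cast_sub h]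
    linarith
  · rw [Nat.sub_eq_zero_of_le h.le, Nat.cast_zero]
    linarith

/-- Open blocks: unlike the closed blocks `[n², n² + 1]` defining `q` (of which `[0, 1]` and
`[1, 2]` meet), they are pairwise disjoint, and `q` is their indicator almost everywhere. -/
def squareBlock (n : ℕ) : Set ℝ := Ioo ((n : ℝ) ^ 2) ((n : ℝ) ^ 2 + 1)

def squareBlocks : Set ℝ := ⋃ n, squareBlock n

theorem sq_add_one_le_sq_of_lt {m n : ℕ} (h : m < n) : (m : ℝ) ^ 2 + 1 ≤ (n : ℝ) ^ 2 := by
  have h' : (m : ℝ) + 1 ≤ n := by exact_mod_cast h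
  nlinarith [(Nat.cast_nonneg m : (0 : ℝ) ≤ m)]

open Function in
theorem pairwise_disjoint_squareBlock : Pairwise (Disjoint on squareBlock) :=
  (pairwise_disjoint_on squareBlock).2 fun _ _ hmn => disjoint_left.2 fun _ hm hn =>
    by linarith [hm.2, hn.1, sq_add_one_le_sq_of_lt hmn]

theorem measurableSet_squareBlocks : MeasurableSet squareBlocks :=
  MeasurableSet.iUnion fun _ => measurableSet_Ioo

theorem tsum_indicator_Icc_sq_ae_eq :
    (fun t => ∑' n : ℕ, (Icc ((n : ℝ) ^ 2) ((n : ℝ) ^ 2 + 1)).indicator (fun _ => (1 : ℝ)) t)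
      =ᵐ[volume] squareBlocks.indicator 1 := by
  have hblock : ∀ n : ℕ, (Icc ((n : ℝ) ^ 2) ((n : ℝ) ^ 2 + 1)).indicator (fun _ => (1 : ℝ))
      =ᵐ[volume] (squareBlock n).indicator 1 :=
    fun n => indicator_ae_eq_of_ae_eq_set Ioo_ae_eq_Icc.symm
  filter_upwards [ae_all_iff.2 hblock] with t ht
  simp only [ht]
  exact tsum_indicator_eq_indicator_iUnion pairwise_disjoint_squareBlock 1 t

theorem squareBlocks_inter_Ioc_subset (a b : ℝ) :
    squareBlocks ∩ Ioc a b ⊆ ⋃ n ∈ Finset.Icc ⌈√(a - 1)⌉₊ ⌊√b⌋₊, squareBlock n := by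
  rintro t ⟨ht, hta, htb⟩
  obtain ⟨n, hn⟩ := mem_iUnion.1 ht
  have hsqrt : √((n : ℝ) ^ 2) = n := Real.sqrt_sq (Nat.cast_nonneg n)
  refine mem_biUnion (Finset.mem_Icc.2
    ⟨Nat.ceil_le.2 ?_, (Nat.le_floor_iff (Real.sqrt_nonneg b)).2 ?_⟩) hn
  · exact hsqrt ▸ Real.sqrt_le_sqrt (by linarith [hn.2])
  · exact hsqrt ▸ Real.sqrt_le_sqrt (by linarith [hn.1])

theorem volume_real_squareBlock (n : ℕ) : volume.real (squareBlock n) = 1 := by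
  simp [squareBlock]

theorem volume_real_squareBlocks_inter_Ioc_le {a b : ℝ} (hab : a ≤ b) :
    volume.real (squareBlocks ∩ Ioc a b) ≤ √b - √(a - 1) + 1 :=
  calc volume.real (squareBlocks ∩ Ioc a b)
      ≤ volume.real (⋃ n ∈ Finset.Icc ⌈√(a - 1)⌉₊ ⌊√b⌋₊, squareBlock n) :=
        measureReal_mono (squareBlocks_inter_Ioc_subset a b)
          (measure_biUnion_lt_top (Finset.finite_toSet _) fun _ _ => measure_Ioo_lt_top).ne
    _ ≤ ∑ n ∈ Finset.Icc ⌈√(a - 1)⌉₊ ⌊√b⌋₊, volume.real (squareBlock n) :=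
        measureReal_biUnion_finset_le _ _
    _ ≤ √b - √(a - 1) + 1 := by
        simpa [volume_real_squareBlock] using
          card_Icc_ceil_floor_le (Real.sqrt_nonneg _) (Real.sqrt_le_sqrt (by linarith))

theorem volume_real_squareBlocks_inter_Ioc_sq (n : ℕ) :
    volume.real (squareBlocks ∩ Ioc ((n : ℝ) ^ 2) ((n : ℝ) ^ 2 + 1)) = 1 := by
  refine le_antisymm ?_ ?_
  · calc volume.real (squareBlocks ∩ Ioc ((n : ℝ) ^ 2) ((n : ℝ) ^ 2 + 1))
        ≤ volume.real (Ioc ((n : ℝ) ^ 2) ((n : ℝ) ^ 2 + 1)) :=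
          measureReal_mono inter_subset_right measure_Ioc_lt_top.ne
      _ = 1 := by simp
  · calc (1 : ℝ) = volume.real (squareBlock n) := (volume_real_squareBlock n).symm
      _ ≤ _ := measureReal_mono (subset_inter (subset_iUnion squareBlock n) Ioo_subset_Ioc_self)
          ((measure_mono inter_subset_right).trans_lt measure_Ioc_lt_top).ne

theorem volume_real_squareBlocks_inter_Ioc_add_le {a l : ℝ} (hl : 1 ≤ l) :
    volume.real (squareBlocks ∩ Ioc a (a + l)) ≤ 3 * √l := by
  have hsqrt_l : 1 ≤ √l := Real.one_le_sqrt.2 hl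
  have hgap : √(a + l) ≤ √(a - 1) + 2 * √l := by
    rw [Real.sqrt_le_left (by positivity)]
    nlinarith [Real.sq_sqrt (by linarith : (0 : ℝ) ≤ l), Real.sq_sqrt' (x := a - 1),
      le_max_left (a - 1) 0, mul_nonneg (Real.sqrt_nonneg (a - 1)) (Real.sqrt_nonneg l)]
  linarith [volume_real_squareBlocks_inter_Ioc_le (by linarith : a ≤ a + l)]

theorem equiWeylVanishing_of_integral_le {Y : Type*} [NormedAddCommGroup Y] {p : ℝ} {f : ℝ → Y}
    {g : ℝ → ℝ} (hp : 0 < p) (hg : Tendsto (fun l => g l / l) atTop (𝓝 0))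
    (hf : ∀ᶠ l in atTop, ∀ x, ∫ s in x..x + l, ‖f s‖ ^ p ≤ g l) : EquiWeylVanishing p f := by
  have hp' : 0 < 1 / p := one_div_pos.2 hp
  have hbound : Tendsto (fun l => ENNReal.ofReal ((g l / l) ^ (1 / p))) atTop (𝓝 0) := by
    have := ENNReal.tendsto_ofReal (hg.rpow_const (Or.inr hp'.le))
    rwa [Real.zero_rpow hp'.ne', ENNReal.ofReal_zero] at this
  refine tendsto_of_tendsto_of_tendsto_of_le_of_le' tendsto_const_nhds hbound
    (Eventually.of_forall fun _ => zero_le) ?_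
  filter_upwards [hf, eventually_gt_atTop 0] with l hl hl0
  refine limsup_le_of_le (by isBoundedDefault)
    (Eventually.of_forall fun t => iSup₂_le fun x _ => ?_)
  have hshift : ∫ s in x..x + l, ‖f (t + s)‖ ^ p = ∫ s in t + x..t + x + l, ‖f s‖ ^ p := by
    rw [intervalIntegral.integral_comp_add_left (fun s => ‖f s‖ ^ p) t, add_assoc]
  have hnonneg : 0 ≤ ∫ s in x..x + l, ‖f (t + s)‖ ^ p :=
    intervalIntegral.integral_nonneg (by linarith) fun _ _ => by positivity
  refine ENNReal.ofReal_le_ofReal (Real.rpow_le_rpow (by positivity) ?_ hp'.le)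
  rw [hshift, one_div_mul_eq_div]
  exact div_le_div_of_nonneg_right (hl _) hl0.le

theorem not_spVanishing_of_frequently_le {Y : Type*} [NormedAddCommGroup Y] {p ε : ℝ}
    {f : ℝ → Y} (hε : 0 < ε) (hf : ∃ᶠ t in atTop, ε ≤ ∫ s in t..t + 1, ‖f s‖ ^ p) :
    ¬ SpVanishing p f := by
  rintro ⟨-, hlim⟩
  obtain ⟨t, hle, hlt⟩ := (hf.and_eventually (hlim.eventually (gt_mem_nhds hε))).exists
  exact hle.not_gt hlt

/-- Remark 2.6: the function `q(t) = Σ_n χ_{[n²,n²+1]}(t)` satisfies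
`∫_0^t q^p ≤ 2 + √t`, is equi-Weyl-`p`-vanishing, but is not Stepanov
`p`-vanishing. -/
theorem example_equiWeylVanishing_not_spVanishing (p : ℝ) (hp : 1 ≤ p)
    (q : ℝ → ℝ)
    (hq : ∀ t : ℝ, q t =
      ∑' n : ℕ, Set.indicator (Set.Icc ((n : ℝ) ^ 2) ((n : ℝ) ^ 2 + 1)) (fun _ => (1 : ℝ)) t) :
    (∀ t : ℝ, 0 ≤ t → (∫ s in (0 : ℝ)..t, |q s| ^ p) ≤ 2 + Real.sqrt t) ∧
      EquiWeylVanishing p q ∧ ¬ SpVanishing p q := by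
  have hp0 : 0 < p := zero_lt_one.trans_le hp
  have hq_ae : q =ᵐ[volume] squareBlocks.indicator 1 := funext hq ▸ tsum_indicator_Icc_sq_ae_eq
  have hint {a b : ℝ} (hab : a ≤ b) :
      ∫ s in a..b, ‖q s‖ ^ p = volume.real (squareBlocks ∩ Ioc a b) :=
    intervalIntegral_norm_rpow_eq_volume_real measurableSet_squareBlocks hq_ae hp0.ne' hab
  refine ⟨fun t ht => ?_, ?_, ?_⟩
  · have hblocks := volume_real_squareBlocks_inter_Ioc_le ht
    simp only [← Real.norm_eq_abs, hint ht]
    norm_num at hblocks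
    linarith
  · refine equiWeylVanishing_of_integral_le (g := fun l => 3 * √l) hp0 ?_
      ((eventually_ge_atTop 1).mono fun l hl x => ?_)
    · simpa [mul_div_assoc, Real.sqrt_div_self] using
        (tendsto_inv_atTop_zero.comp Real.tendsto_sqrt_atTop).const_mul 3
    · rw [hint (by linarith)]
      exact volume_real_squareBlocks_inter_Ioc_add_le hl
  · have hsq : Tendsto (fun n : ℕ => (n : ℝ) ^ 2) atTop atTop :=
      (tendsto_pow_atTop two_ne_zero).comp tendsto_natCast_atTop_atTop
    refine not_spVanishing_of_frequently_le one_pos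
      (hsq.frequently (Frequently.of_forall fun n => ?_))
    rw [hint (by linarith), volume_real_squareBlocks_inter_Ioc_sq]
end
end
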